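/- arXiv:1707.00087 — 6 statements merged into one kernel-verified Lean document; each statement's English description precedes it below -/
import Mathlib

section
/- Let S be a Borel subset of a compact metric space X, let k* be a positive integer for which the covering number N_{3^{-(k*+1)}}(S) is finite, and let S_1, ..., S_{k*} be Borel subsets of S. Then there exists a dyadic partition {Q^k}_{1 ≤ k ≤ k*} of S with parameter δ = 1/3 such that for each 1 ≤ k ≤ k*, the number of sets in Q^k intersecting S_k is at most N_{3^{-(k+1)}}(S_k). -/
open MeasureTheory Metric ENNReal Filter

noncomputable section

/-- `W_p^p(μ, ν)`: the optimal transport cost with cost `dist^p`, i.e. the `p`-th power of the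
Wasserstein distance of order `p`, as an infimum over couplings. -/
noncomputable def Wpp {X : Type*} [MeasurableSpace X] [PseudoMetricSpace X]
    (p : ℝ) (μ ν : Measure X) : ℝ≥0∞ :=
  ⨅ (γ : Measure (X × X)) (_ : γ.map Prod.fst = μ) (_ : γ.map Prod.snd = ν),
    ∫⁻ z, ENNReal.ofReal (dist z.1 z.2 ^ p) ∂γ

/-- The empirical measure of the first `n` samples `Xs 0, …, Xs (n-1)`. -/
noncomputable def empMeas {X : Type*} [MeasurableSpace X] {Ω : Type*} [MeasurableSpace Ω]
    (Xs : ℕ → Ω → X) (n : ℕ) (ω : Ω) : Measure X :=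
  (n : ℝ≥0∞)⁻¹ • ∑ i ∈ Finset.range n, Measure.dirac (Xs i ω)

/-- `Xs` is an i.i.d. sequence of samples from `μ`, defined on `(Ω, P)`. -/
def IsIIDSample {X : Type*} {Ω : Type*} [MeasurableSpace Ω] [MeasurableSpace X]
    (P : Measure Ω) (μ : Measure X) (Xs : ℕ → Ω → X) : Prop :=
  (∀ i, Measurable (Xs i)) ∧ (∀ i, Measure.map (Xs i) P = μ) ∧
    ProbabilityTheory.iIndepFun Xs P

/-- `N_ε(S)`: the minimal number of closed balls of diameter `ε` needed to cover `S`. -/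
noncomputable def coveringNumber {X : Type*} [PseudoMetricSpace X] (ε : ℝ) (S : Set X) : ℕ :=
  sInf {m | ∃ F : Finset X, F.card = m ∧ S ⊆ ⋃ x ∈ F, Metric.closedBall x (ε / 2)}

/-- `N_ε(μ, τ) = inf {N_ε(S) : μ(S) ≥ 1 - τ}`. -/
noncomputable def covN {X : Type*} [MeasurableSpace X] [PseudoMetricSpace X]
    (μ : Measure X) (ε τ : ℝ) : ℕ :=
  sInf {m | ∃ S : Set X, MeasurableSet S ∧ ENNReal.ofReal (1 - τ) ≤ μ S ∧
    ∃ F : Finset X, F.card = m ∧ S ⊆ ⋃ x ∈ F, Metric.closedBall x (ε / 2)}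

/-- `d_ε(μ, τ) = log N_ε(μ, τ) / (- log ε)`. -/
noncomputable def dEps {X : Type*} [MeasurableSpace X] [PseudoMetricSpace X]
    (μ : Measure X) (ε τ : ℝ) : ℝ :=
  Real.log (covN μ ε τ) / (- Real.log ε)

/-- A dyadic partition of `S` with parameter `δ`: for `1 ≤ k ≤ kstar`, `Q k` is a Borel
partition of `S` into sets of diameter at most `δ ^ k`, and `Q (k+1)` refines `Q k`. -/
def IsDyadicPartition {X : Type*} [PseudoMetricSpace X] [MeasurableSpace X]
    (S : Set X) (δ : ℝ) (kstar : ℕ) (Q : ℕ → Finset (Set X)) : Prop :=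
  ∀ k, 1 ≤ k → k ≤ kstar →
    (∀ q ∈ Q k, MeasurableSet q) ∧
    (⋃ q ∈ Q k, q) = S ∧
    ((Q k : Set (Set X)).PairwiseDisjoint id) ∧
    (∀ q ∈ Q k, Metric.diam q ≤ δ ^ k) ∧
    (k + 1 ≤ kstar → ∀ q' ∈ Q (k + 1), ∀ q ∈ Q k, q' ⊆ q ∨ q' ∩ q = ∅)

section Aux

variable {X : Type*} [MetricSpace X] [MeasurableSpace X] [BorelSpace X]

lemma count_aux {Q Qm : Finset (Set X)} (T : Set X)
    (h : ∀ q ∈ Q, (q ∩ T).Nonempty → q ∈ Qm) :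
    Nat.card {q : Set X // q ∈ Q ∧ (q ∩ T).Nonempty} ≤ Qm.card := by
  have hmem : ∀ q : {q : Set X // q ∈ Q ∧ (q ∩ T).Nonempty}, (q : Set X) ∈ Qm :=
    fun q => h q q.2.1 q.2.2
  have hinj : Function.Injective (fun q : {q : Set X // q ∈ Q ∧ (q ∩ T).Nonempty} =>
      (⟨q, hmem q⟩ : {x // x ∈ Qm})) := by
    intro a b hab
    exact Subtype.ext (by simpa using hab)
  calc Nat.card {q : Set X // q ∈ Q ∧ (q ∩ T).Nonempty} ≤ Nat.card {x // x ∈ Qm} :=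
        Nat.card_le_card_of_injective _ hinj
    _ = Qm.card := by simp [Nat.card_eq_fintype_card]

lemma base_step [Nonempty X] (S T : Set X) (hS : MeasurableSet S) (r : ℝ) (hr : 0 ≤ r)
    (F C : Finset X) (hFC : F ⊆ C)
    (hT : T ⊆ ⋃ x ∈ F, closedBall x r)
    (hSc : S ⊆ ⋃ x ∈ C, closedBall x r) :
    ∃ Q : Finset (Set X),
      (∀ q ∈ Q, MeasurableSet q) ∧
      (⋃ q ∈ Q, q) = S ∧
      ((Q : Set (Set X)).PairwiseDisjoint id) ∧
      (∀ q ∈ Q, Metric.diam q ≤ 2 * r) ∧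
      Nat.card {q : Set X // q ∈ Q ∧ (q ∩ T).Nonempty} ≤ F.card := by
  classical
  have henum : ∃ (c : ℕ → X) (n : ℕ),
      (∀ x ∈ F, ∃ i, i < F.card ∧ c i = x) ∧ (∀ x ∈ C, ∃ i, i < n ∧ c i = x) := by
    have hlen : F.toList.length ≤ (F.toList ++ (C \ F).toList).length := by
      rw [List.length_append]; omega
    refine ⟨fun i => (F.toList ++ (C \ F).toList).getD i (Classical.arbitrary X),
      (F.toList ++ (C \ F).toList).length, ?_, ?_⟩
    · intro x hx
      obtain ⟨i, hi, hget⟩ := List.mem_iff_getElem.1 (Finset.mem_toList.2 hx)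
      refine ⟨i, by simpa [Finset.length_toList] using hi, ?_⟩
      show (F.toList ++ (C \ F).toList).getD i (Classical.arbitrary X) = x
      rw [List.getD_eq_getElem _ _ (lt_of_lt_of_le hi hlen)]
      exact (List.getElem_append_left hi).trans hget
    · intro x hx
      have hxL : x ∈ F.toList ++ (C \ F).toList := by
        rw [List.mem_append]
        by_cases hxF : x ∈ F
        · exact Or.inl (Finset.mem_toList.2 hxF)
        · exact Or.inr (Finset.mem_toList.2 (Finset.mem_sdiff.2 ⟨hx, hxF⟩))
      obtain ⟨i, hi, hget⟩ := List.mem_iff_getElem.1 hxL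
      refine ⟨i, hi, ?_⟩
      show (F.toList ++ (C \ F).toList).getD i (Classical.arbitrary X) = x
      rw [List.getD_eq_getElem _ _ hi]
      exact hget
  obtain ⟨c, n, hmemF, hmemC⟩ := henum
  set piece : ℕ → Set X := fun i =>
    (S ∩ closedBall (c i) r) \ ⋃ j ∈ Finset.range i, closedBall (c j) r with hpiece
  have hpieceS : ∀ i, piece i ⊆ S := fun i => fun p hp => hp.1.1
  have hpieceB : ∀ i, piece i ⊆ closedBall (c i) r := fun i => fun p hp => hp.1.2
  have hpieceN : ∀ i j, j < i → piece i ∩ closedBall (c j) r = ∅ := by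
    intro i j hj
    ext p
    simp only [Set.mem_inter_iff, Set.mem_empty_iff_false, iff_false, not_and]
    intro hp
    intro hpb
    exact hp.2 (Set.mem_biUnion (Finset.mem_range.2 hj) hpb)
  refine ⟨(Finset.range n).image piece, ?_, ?_, ?_, ?_, ?_⟩
  · intro q hq
    obtain ⟨i, _, rfl⟩ := Finset.mem_image.1 hq
    exact ((hS.inter measurableSet_closedBall).diff
      (Finset.measurableSet_biUnion _ (fun j _ => measurableSet_closedBall)))
  · apply Set.Subset.antisymm
    · intro p hp
      obtain ⟨q, hq, hpq⟩ := Set.mem_iUnion₂.1 hp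
      obtain ⟨i, _, rfl⟩ := Finset.mem_image.1 hq
      exact hpieceS i hpq
    · intro p hp
      obtain ⟨x, hxC, hpx⟩ := Set.mem_iUnion₂.1 (hSc hp)
      obtain ⟨i, hiL, hci⟩ := hmemC x hxC
      have hex : ∃ i, p ∈ closedBall (c i) r := ⟨i, hci ▸ hpx⟩
      set i0 := Nat.find hex with hi0
      have hi0L : i0 < n := lt_of_le_of_lt (Nat.find_min' hex (hci ▸ hpx)) hiL
      have hpi0 : p ∈ piece i0 := by
        refine ⟨⟨hp, Nat.find_spec hex⟩, ?_⟩
        intro hmem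
        obtain ⟨j, hj, hpj⟩ := Set.mem_iUnion₂.1 hmem
        exact Nat.find_min hex (Finset.mem_range.1 hj) hpj
      exact Set.mem_iUnion₂.2 ⟨piece i0,
        Finset.mem_image_of_mem piece (Finset.mem_range.2 hi0L), hpi0⟩
  · intro q1 hq1 q2 hq2 hne
    obtain ⟨i, _, rfl⟩ := Finset.mem_image.1 (Finset.mem_coe.1 hq1)
    obtain ⟨j, _, rfl⟩ := Finset.mem_image.1 (Finset.mem_coe.1 hq2)
    have hij : i ≠ j := fun h => hne (by rw [h])
    rcases hij.lt_or_gt with h | h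
    · refine Set.disjoint_left.2 (fun p hp1 hp2 => ?_)
      have hmem : p ∈ piece j ∩ closedBall (c i) r := ⟨hp2, hpieceB i hp1⟩
      rw [hpieceN j i h] at hmem
      exact hmem
    · refine Set.disjoint_left.2 (fun p hp1 hp2 => ?_)
      have hmem : p ∈ piece i ∩ closedBall (c j) r := ⟨hp1, hpieceB j hp2⟩
      rw [hpieceN i j h] at hmem
      exact hmem
  · intro q hq
    obtain ⟨i, _, rfl⟩ := Finset.mem_image.1 hq
    calc Metric.diam (piece i) ≤ Metric.diam (closedBall (c i) r) :=
          Metric.diam_mono (hpieceB i) isBounded_closedBall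
      _ ≤ 2 * r := Metric.diam_closedBall hr
  · refine le_trans (count_aux (Qm := (Finset.range F.card).image piece) T ?_)
      (le_trans (Finset.card_image_le) (by rw [Finset.card_range]))
    intro q hq hqT
    obtain ⟨i, _, rfl⟩ := Finset.mem_image.1 hq
    obtain ⟨p, hp1, hp2⟩ := hqT
    obtain ⟨x, hxF, hpx⟩ := Set.mem_iUnion₂.1 (hT hp2)
    obtain ⟨j, hjF, hcj⟩ := hmemF x hxF
    have hij : i ≤ j := by
      by_contra hcon
      push_neg at hcon
      have hmem : p ∈ piece i ∩ closedBall (c j) r := ⟨hp1, hcj ▸ hpx⟩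
      rw [hpieceN i j hcon] at hmem
      exact hmem
    exact Finset.mem_image_of_mem piece (Finset.mem_range.2 (lt_of_le_of_lt hij hjF))

lemma merge_step [Nonempty X] [CompactSpace X] (S T : Set X) (P : Finset (Set X)) (d r : ℝ)
    (hd : 0 ≤ d) (hr : 0 ≤ r)
    (hmeas : ∀ q ∈ P, MeasurableSet q)
    (hunion : (⋃ q ∈ P, q) = S)
    (hdisj : ((P : Set (Set X)).PairwiseDisjoint id))
    (hdiam : ∀ q ∈ P, Metric.diam q ≤ d)
    (F C : Finset X) (hFC : F ⊆ C)
    (hT : T ⊆ ⋃ x ∈ F, closedBall x r)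
    (hSc : S ⊆ ⋃ x ∈ C, closedBall x r) :
    ∃ Q : Finset (Set X),
      (∀ q ∈ Q, MeasurableSet q) ∧
      (⋃ q ∈ Q, q) = S ∧
      ((Q : Set (Set X)).PairwiseDisjoint id) ∧
      (∀ q ∈ Q, Metric.diam q ≤ 2 * d + 2 * r) ∧
      (∀ p ∈ P, ∀ q ∈ Q, p ⊆ q ∨ p ∩ q = ∅) ∧
      Nat.card {q : Set X // q ∈ Q ∧ (q ∩ T).Nonempty} ≤ F.card := by
  classical
  have hex' : ∀ p : Set X, ∃ x : X, (p ∈ P ∧ p.Nonempty) →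
      (x ∈ C ∧ (p ∩ closedBall x r).Nonempty ∧ ((p ∩ T).Nonempty → x ∈ F)) := by
    intro p
    by_cases h : p ∈ P ∧ p.Nonempty
    · by_cases hpt : (p ∩ T).Nonempty
      · obtain ⟨z, hz1, hz2⟩ := hpt
        obtain ⟨x, hxF, hzx⟩ := Set.mem_iUnion₂.1 (hT hz2)
        exact ⟨x, fun _ => ⟨hFC hxF, ⟨z, hz1, hzx⟩, fun _ => hxF⟩⟩
      · obtain ⟨z, hz⟩ := h.2
        have hzS : z ∈ S := hunion ▸ Set.mem_biUnion h.1 hz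
        obtain ⟨x, hxC, hzx⟩ := Set.mem_iUnion₂.1 (hSc hzS)
        exact ⟨x, fun _ => ⟨hxC, ⟨z, hz, hzx⟩, fun hcon => absurd hcon hpt⟩⟩
    · exact ⟨Classical.arbitrary X, fun hc => absurd hc h⟩
  choose a ha using hex'
  set piece : X → Set X := fun x =>
    ⋃ p ∈ P.filter (fun p => p.Nonempty ∧ a p = x), p with hpiece
  have hkey : ∀ x, ∀ z ∈ piece x, ∃ p ∈ P, p.Nonempty ∧ a p = x ∧ z ∈ p := by
    intro x z hz
    obtain ⟨p, hp, hzp⟩ := Set.mem_iUnion₂.1 hz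
    obtain ⟨hpP, hpcond⟩ := Finset.mem_filter.1 hp
    exact ⟨p, hpP, hpcond.1, hpcond.2, hzp⟩
  have hpieceS : ∀ x, piece x ⊆ S := by
    intro x z hz
    obtain ⟨p, hpP, _, _, hzp⟩ := hkey x z hz
    exact hunion ▸ Set.mem_biUnion hpP hzp
  refine ⟨C.image piece, ?_, ?_, ?_, ?_, ?_, ?_⟩
  · intro q hq
    obtain ⟨x, _, rfl⟩ := Finset.mem_image.1 hq
    exact Finset.measurableSet_biUnion _ (fun p hp => hmeas p (Finset.mem_filter.1 hp).1)
  · apply Set.Subset.antisymm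
    · intro z hz
      obtain ⟨q, hq, hzq⟩ := Set.mem_iUnion₂.1 hz
      obtain ⟨x, _, rfl⟩ := Finset.mem_image.1 hq
      exact hpieceS x hzq
    · intro z hz
      obtain ⟨p, hpP, hzp⟩ := Set.mem_iUnion₂.1 (hunion ▸ hz : z ∈ ⋃ p ∈ P, p)
      have hpne : p.Nonempty := ⟨z, hzp⟩
      have hap := ha p ⟨hpP, hpne⟩
      have hzpiece : z ∈ piece (a p) :=
        Set.mem_biUnion (Finset.mem_filter.2 ⟨hpP, hpne, rfl⟩) hzp
      exact Set.mem_iUnion₂.2 ⟨piece (a p), Finset.mem_image_of_mem piece hap.1, hzpiece⟩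
  · intro q1 hq1 q2 hq2 hne
    obtain ⟨x, _, rfl⟩ := Finset.mem_image.1 (Finset.mem_coe.1 hq1)
    obtain ⟨y, _, rfl⟩ := Finset.mem_image.1 (Finset.mem_coe.1 hq2)
    refine Set.disjoint_left.2 (fun z hz1 hz2 => ?_)
    obtain ⟨p, hpP, hpne, hpa, hzp⟩ := hkey x z hz1
    obtain ⟨p', hpP', hpne', hpa', hzp'⟩ := hkey y z hz2
    have hpp' : p = p' := by
      by_contra hcon
      exact Set.disjoint_left.1 (hdisj hpP hpP' hcon) hzp hzp'
    exact hne (by rw [← hpa, ← hpa', hpp'])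
  · intro q hq
    obtain ⟨x, _, rfl⟩ := Finset.mem_image.1 hq
    refine Metric.diam_le_of_forall_dist_le (by linarith) ?_
    intro z hz z' hz'
    obtain ⟨p, hpP, hpne, hpa, hzp⟩ := hkey x z hz
    obtain ⟨p', hpP', hpne', hpa', hzp'⟩ := hkey x z' hz'
    obtain ⟨w, hwp, hwx⟩ := (ha p ⟨hpP, hpne⟩).2.1
    obtain ⟨w', hwp', hwx'⟩ := (ha p' ⟨hpP', hpne'⟩).2.1
    have hb : Bornology.IsBounded p :=
      (isCompact_univ.isBounded).subset (Set.subset_univ _)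
    have hb' : Bornology.IsBounded p' :=
      (isCompact_univ.isBounded).subset (Set.subset_univ _)
    have h1 : dist z w ≤ d := le_trans (Metric.dist_le_diam_of_mem hb hzp hwp) (hdiam p hpP)
    have h2 : dist w' z' ≤ d :=
      le_trans (Metric.dist_le_diam_of_mem hb' hwp' hzp') (hdiam p' hpP')
    have h3 : dist w w' ≤ 2 * r := by
      rw [hpa] at hwx
      rw [hpa'] at hwx'
      have hwax : dist w x ≤ r := mem_closedBall.1 hwx
      have hwax' : dist w' x ≤ r := mem_closedBall.1 hwx'
      have ht := dist_triangle w x w'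
      have hcm : dist x w' = dist w' x := dist_comm _ _
      linarith
    calc dist z z' ≤ dist z w + dist w w' + dist w' z' := dist_triangle4 _ _ _ _
      _ ≤ 2 * d + 2 * r := by linarith
  · intro p hpP q hq
    obtain ⟨x, _, rfl⟩ := Finset.mem_image.1 hq
    by_cases hcond : p.Nonempty ∧ a p = x
    · exact Or.inl (fun z hz => Set.mem_biUnion (Finset.mem_filter.2 ⟨hpP, hcond⟩) hz)
    · refine Or.inr (Set.eq_empty_of_forall_notMem (fun z hz => ?_))
      obtain ⟨p', hpP', hpne', hpa', hzp'⟩ := hkey x z hz.2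
      have hpp' : p = p' := by
        by_contra hcon
        exact Set.disjoint_left.1 (hdisj hpP hpP' hcon) hz.1 hzp'
      exact hcond (hpp' ▸ ⟨hpne', hpa'⟩)
  · refine le_trans (count_aux (Qm := F.image piece) T ?_) Finset.card_image_le
    intro q hq hqT
    obtain ⟨x, _, rfl⟩ := Finset.mem_image.1 hq
    obtain ⟨z, hz1, hz2⟩ := hqT
    obtain ⟨p, hpP, hpne, hpa, hzp⟩ := hkey x z hz1
    have hxF : x ∈ F := hpa ▸ (ha p ⟨hpP, hpne⟩).2.2 ⟨z, hzp, hz2⟩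
    exact Finset.mem_image_of_mem piece hxF

lemma rpow_third (k : ℕ) : (3 : ℝ) ^ (-((k : ℝ) + 1)) = (1 / 3 : ℝ) ^ (k + 1) := by
  rw [show -((k : ℝ) + 1) = -(((k + 1 : ℕ) : ℝ)) by push_cast; ring,
    Real.rpow_neg (by norm_num), Real.rpow_natCast]
  rw [one_div, inv_pow]

end Aux


theorem stmt1 {X : Type*} [MetricSpace X] [CompactSpace X] [MeasurableSpace X] [BorelSpace X]
    (S : Set X) (hS : MeasurableSet S) (kstar : ℕ) (hkstar : 1 ≤ kstar)
    (hfin : {m | ∃ F : Finset X, F.card = m ∧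
      S ⊆ ⋃ x ∈ F, Metric.closedBall x ((3 : ℝ) ^ (-((kstar : ℝ) + 1)) / 2)}.Nonempty)
    (Ssub : ℕ → Set X)
    (hSsub : ∀ k, 1 ≤ k → k ≤ kstar → MeasurableSet (Ssub k) ∧ Ssub k ⊆ S) :
    ∃ Q : ℕ → Finset (Set X), IsDyadicPartition S (1 / 3) kstar Q ∧
      ∀ k, 1 ≤ k → k ≤ kstar →
        Nat.card {q : Set X // q ∈ Q k ∧ (q ∩ Ssub k).Nonempty} ≤
          coveringNumber ((3 : ℝ) ^ (-((k : ℝ) + 1))) (Ssub k) := by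
  classical
  rcases isEmpty_or_nonempty X with hX | hX
  · have hSempty : S = ∅ := Set.eq_empty_of_isEmpty S
    refine ⟨fun _ => ∅, ?_, ?_⟩
    · intro k hk1 hk2
      refine ⟨by simp, by simp [hSempty], by simp, by simp, by simp⟩
    · intro k _ _
      have hemp : IsEmpty {q : Set X // q ∈ (∅ : Finset (Set X)) ∧ (q ∩ Ssub k).Nonempty} :=
        ⟨fun q => by simpa using q.2.1⟩
      simp [Nat.card_of_isEmpty]
  · obtain ⟨m0, F0, hF0card, hF0⟩ := hfin
    have hrnonneg : ∀ k : ℕ, (0:ℝ) ≤ (3:ℝ) ^ (-((k:ℝ)+1)) :=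
      fun k => Real.rpow_nonneg (by norm_num) _
    have hrmono : ∀ k, k ≤ kstar → (3:ℝ)^(-((kstar:ℝ)+1)) ≤ (3:ℝ)^(-((k:ℝ)+1)) := by
      intro k hk
      apply Real.rpow_le_rpow_of_exponent_le (by norm_num)
      have : (k:ℝ) ≤ (kstar:ℝ) := Nat.cast_le.2 hk
      linarith
    have hcovS : ∀ k, k ≤ kstar →
        S ⊆ ⋃ x ∈ F0, Metric.closedBall x ((3:ℝ)^(-((k:ℝ)+1))/2) := by
      intro k hk p hp
      obtain ⟨x, hx, hpx⟩ := Set.mem_iUnion₂.1 (hF0 hp)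
      exact Set.mem_iUnion₂.2 ⟨x, hx,
        Metric.closedBall_subset_closedBall (by linarith [hrmono k hk]) hpx⟩
    have hcovS' : ∀ k, k ≤ kstar → ∀ Fk : Finset X,
        S ⊆ ⋃ x ∈ Fk ∪ F0, Metric.closedBall x ((3:ℝ)^(-((k:ℝ)+1))/2) := by
      intro k hk Fk p hp
      obtain ⟨x, hx, hpx⟩ := Set.mem_iUnion₂.1 (hcovS k hk hp)
      exact Set.mem_iUnion₂.2 ⟨x, Finset.mem_union_right _ hx, hpx⟩
    have hcov : ∀ k, 1 ≤ k → k ≤ kstar → ∃ Fk : Finset X,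
        Fk.card = coveringNumber ((3:ℝ)^(-((k:ℝ)+1))) (Ssub k) ∧
        Ssub k ⊆ ⋃ x ∈ Fk, Metric.closedBall x ((3:ℝ)^(-((k:ℝ)+1))/2) := by
      intro k hk1 hk2
      have hne : {m | ∃ Fk : Finset X, Fk.card = m ∧
          Ssub k ⊆ ⋃ x ∈ Fk, Metric.closedBall x ((3:ℝ)^(-((k:ℝ)+1))/2)}.Nonempty :=
        ⟨F0.card, F0, rfl, fun p hp => hcovS k hk2 ((hSsub k hk1 hk2).2 hp)⟩
      obtain ⟨Fk, hcard, hcover⟩ := Nat.sInf_mem hne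
      exact ⟨Fk, hcard, hcover⟩
    have key : ∀ j : ℕ, ∃ Q : ℕ → Finset (Set X),
        ∀ k, kstar - j ≤ k → 1 ≤ k → k ≤ kstar →
          (∀ q ∈ Q k, MeasurableSet q) ∧
          (⋃ q ∈ Q k, q) = S ∧
          ((Q k : Set (Set X)).PairwiseDisjoint id) ∧
          (∀ q ∈ Q k, Metric.diam q ≤ (1/3 : ℝ) ^ k) ∧
          (k + 1 ≤ kstar → ∀ q' ∈ Q (k+1), ∀ q ∈ Q k, q' ⊆ q ∨ q' ∩ q = ∅) ∧
          Nat.card {q : Set X // q ∈ Q k ∧ (q ∩ Ssub k).Nonempty} ≤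
            coveringNumber ((3:ℝ)^(-((k:ℝ)+1))) (Ssub k) := by
      intro j
      induction j with
      | zero =>
        obtain ⟨Fk, hFkcard, hFkcov⟩ := hcov kstar hkstar le_rfl
        obtain ⟨Q0, h1, h2, h3, h4, h5⟩ := base_step S (Ssub kstar) hS
          ((3:ℝ)^(-((kstar:ℝ)+1))/2) (by linarith [hrnonneg kstar])
          Fk (Fk ∪ F0) Finset.subset_union_left hFkcov (hcovS' kstar le_rfl Fk)
        refine ⟨fun _ => Q0, ?_⟩
        intro k hk hk1 hk2
        have hkk : k = kstar := le_antisymm hk2 (by omega)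
        subst hkk
        refine ⟨h1, h2, h3, ?_, ?_, ?_⟩
        · intro q hq
          calc Metric.diam q ≤ 2 * ((3:ℝ)^(-((k:ℝ)+1))/2) := h4 q hq
            _ = (1/3 : ℝ)^(k+1) := by rw [rpow_third k]; ring
            _ ≤ (1/3 : ℝ)^k :=
              pow_le_pow_of_le_one (by norm_num) (by norm_num) (by omega)
        · intro hcon
          omega
        · rw [hFkcard] at h5
          exact h5
      | succ j ih =>
        obtain ⟨Q, hQ⟩ := ih
        by_cases hcase : kstar - j ≤ kstar - (j+1)
        · exact ⟨Q, fun k hk hk1 hk2 => hQ k (hcase.trans hk) hk1 hk2⟩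
        · set k0 := kstar - (j+1) with hk0def
          by_cases hk0 : 1 ≤ k0
          · have hk0star : k0 ≤ kstar := by omega
            have hsucc : k0 + 1 = kstar - j := by omega
            have hP := hQ (k0+1) (by omega) (by omega) (by omega)
            obtain ⟨Fk, hFkcard, hFkcov⟩ := hcov k0 hk0 hk0star
            obtain ⟨Qn, g1, g2, g3, g4, g5, g6⟩ := merge_step S (Ssub k0) (Q (k0+1))
              ((1/3 : ℝ)^(k0+1)) ((3:ℝ)^(-((k0:ℝ)+1))/2)
              (by positivity) (by linarith [hrnonneg k0])
              hP.1 hP.2.1 hP.2.2.1 hP.2.2.2.1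
              Fk (Fk ∪ F0) Finset.subset_union_left hFkcov (hcovS' k0 hk0star Fk)
            refine ⟨Function.update Q k0 Qn, ?_⟩
            intro k hk hk1 hk2
            by_cases hkk : k = k0
            · subst hkk
              rw [Function.update_self]
              refine ⟨g1, g2, g3, ?_, ?_, ?_⟩
              · intro q hq
                calc Metric.diam q ≤ 2 * (1/3 : ℝ)^(k0+1) + 2 * ((3:ℝ)^(-((k0:ℝ)+1))/2) :=
                      g4 q hq
                  _ = 3 * (1/3 : ℝ)^(k0+1) := by rw [rpow_third k0]; ring
                  _ = (1/3 : ℝ)^k0 := by rw [pow_succ]; ring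
              · intro _ q' hq' q hq
                rw [Function.update_of_ne (by omega)] at hq'
                exact g5 q' hq' q hq
              · rw [hFkcard] at g6
                exact g6
            · have hge : kstar - j ≤ k := by omega
              have h := hQ k hge hk1 hk2
              rw [Function.update_of_ne hkk, Function.update_of_ne (show k+1 ≠ k0 by omega)]
              exact h
          · refine ⟨Q, fun k hk hk1 hk2 => hQ k ?_ hk1 hk2⟩
            omega
    obtain ⟨Q, hQ⟩ := key kstar
    refine ⟨Q, ?_, ?_⟩
    · intro k hk1 hk2
      obtain ⟨a, b, c, d, e, f⟩ := hQ k (by omega) hk1 hk2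
      exact ⟨a, b, c, d, e⟩
    · intro k hk1 hk2
      exact (hQ k (by omega) hk1 hk2).2.2.2.2.2

end
end

section
/- Let μ be a Borel probability measure on a metric space X, let μ̂_n be the empirical measure of n i.i.d. samples from μ, let {Q_i^k} be a finite Borel partition of X, and let S be any Borel set. Then E[Σ_i |μ(Q_i^k) − μ̂_n(Q_i^k)|] ≤ 2(1 − μ(S)) + sqrt(|{i : Q_i^k ∩ S ≠ ∅}| / n). -/
open MeasureTheory Metric ENNReal Filter

noncomputable section

open ProbabilityTheory

section AuxStmt2

variable {Ω : Type*} [MeasurableSpace Ω] {P : Measure Ω} [IsProbabilityMeasure P]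

lemma aux_integral_abs_le_sqrt (Z : Ω → ℝ) (hZ : MemLp Z 2 P) :
    ∫ ω, |Z ω| ∂P ≤ Real.sqrt (∫ ω, Z ω ^ 2 ∂P) := by
  have habs : MemLp (fun ω => |Z ω|) 2 P := hZ.abs
  have h1 := variance_eq_sub habs
  have h2 := variance_nonneg (fun ω => |Z ω|) P
  have hsqeq : P[(fun ω => |Z ω|) ^ 2] = ∫ ω, Z ω ^ 2 ∂P := by
    apply integral_congr_ae
    filter_upwards with ω
    simp [sq_abs]
  have h3 : (∫ ω, |Z ω| ∂P) ^ 2 ≤ ∫ ω, Z ω ^ 2 ∂P := by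
    rw [h1, hsqeq] at h2
    linarith
  exact (Real.le_sqrt (integral_nonneg fun ω => abs_nonneg _)
    (le_trans (sq_nonneg _) h3)).2 h3

end AuxStmt2

theorem stmt2 {X : Type*} [MetricSpace X] [MeasurableSpace X] [BorelSpace X]
    {Ω : Type*} [MeasurableSpace Ω] (P : Measure Ω) [IsProbabilityMeasure P]
    (μ : Measure X) [IsProbabilityMeasure μ]
    (Xs : ℕ → Ω → X) (hiid : IsIIDSample P μ Xs) (n : ℕ) (hn : 1 ≤ n)
    (Q : Finset (Set X)) (hmeasQ : ∀ q ∈ Q, MeasurableSet q)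
    (hcover : (⋃ q ∈ Q, q) = Set.univ)
    (hdisj : (Q : Set (Set X)).PairwiseDisjoint id)
    (S : Set X) (hS : MeasurableSet S) :
    ∫ ω, (∑ q ∈ Q, |(μ q).toReal - (empMeas Xs n ω q).toReal|) ∂P ≤
      2 * (1 - (μ S).toReal) +
        Real.sqrt ((Nat.card {q : Set X // q ∈ Q ∧ (q ∩ S).Nonempty} : ℝ) / n) := by
  classical
  obtain ⟨hXmeas, hXmap, hXind⟩ := hiid
  have hnpos : (0 : ℝ) < n := by exact_mod_cast hn
  have hn0 : (n : ℝ) ≠ 0 := hnpos.ne'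
  set Y : Set X → ℕ → Ω → ℝ := fun q i ω => q.indicator (fun _ => (1 : ℝ)) (Xs i ω) with hYdef
  set f : Set X → Ω → ℝ := fun q ω => (n : ℝ)⁻¹ * ∑ i ∈ Finset.range n, Y q i ω with hfdef
  have hYbd : ∀ q i ω, Y q i ω = 0 ∨ Y q i ω = 1 := by
    intro q i ω
    by_cases h : Xs i ω ∈ q <;> simp [hYdef, h]
  have hYnonneg : ∀ q i ω, 0 ≤ Y q i ω := by
    intro q i ω; rcases hYbd q i ω with h | h <;> simp [h]
  -- empirical measure formula
  have hemp : ∀ q, MeasurableSet q → ∀ ω, (empMeas Xs n ω q).toReal = f q ω := by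
    intro q hq ω
    have h1 : empMeas Xs n ω q
        = (n : ℝ≥0∞)⁻¹ * ∑ i ∈ Finset.range n, Measure.dirac (Xs i ω) q := by
      simp [empMeas, Measure.finset_sum_apply]
    rw [h1]
    have h2 : ∀ i, Measure.dirac (Xs i ω) q = ENNReal.ofReal (Y q i ω) := by
      intro i
      rw [Measure.dirac_apply' _ hq]
      by_cases h : Xs i ω ∈ q <;> simp [hYdef, h]
    simp only [h2]
    rw [ENNReal.toReal_mul, ENNReal.toReal_sum (fun i _ => ENNReal.ofReal_ne_top)]
    simp only [hfdef]
    congr 1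
    · simp
    · exact Finset.sum_congr rfl fun i _ => ENNReal.toReal_ofReal (hYnonneg q i _)
  have hYmeas : ∀ q, MeasurableSet q → ∀ i, Measurable (Y q i) :=
    fun q hq i => (measurable_const.indicator hq).comp (hXmeas i)
  have hYmem : ∀ q, MeasurableSet q → ∀ i, MemLp (Y q i) 2 P := by
    intro q hq i
    refine MemLp.of_bound (hYmeas q hq i).aestronglyMeasurable 1 ?_
    filter_upwards with ω
    rcases hYbd q i ω with h | h <;> simp [h]
  have hYint : ∀ q, MeasurableSet q → ∀ i, ∫ ω, Y q i ω ∂P = (μ q).toReal := by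
    intro q hq i
    have h : ∫ ω, Y q i ω ∂P = ∫ x, q.indicator (fun _ => (1 : ℝ)) x ∂(P.map (Xs i)) := by
      rw [integral_map (hXmeas i).aemeasurable
        (measurable_const.indicator hq).aestronglyMeasurable]
    rw [h, hXmap i]
    exact integral_indicator_one hq
  have hYvar : ∀ q, MeasurableSet q → ∀ i, variance (Y q i) P ≤ (μ q).toReal := by
    intro q hq i
    rw [variance_eq_sub (hYmem q hq i)]
    have hsq : P[(Y q i) ^ 2] = (μ q).toReal := by
      rw [← hYint q hq i]
      apply integral_congr_ae
      filter_upwards with ω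
      rcases hYbd q i ω with h | h <;> simp [h]
    rw [hsq]
    nlinarith [sq_nonneg (P[Y q i])]
  have hYind : ∀ q, MeasurableSet q →
      ProbabilityTheory.iIndepFun (Y q) P := fun q hq =>
    hXind.comp (fun _ => q.indicator fun _ => (1 : ℝ)) fun _ => measurable_const.indicator hq
  -- properties of f
  have hfmem : ∀ q, MeasurableSet q → MemLp (f q) 2 P := by
    intro q hq
    have hsum : MemLp (∑ i ∈ Finset.range n, Y q i) 2 P :=
      memLp_finset_sum' _ fun i _ => hYmem q hq i
    have := hsum.const_mul ((n : ℝ)⁻¹)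
    simpa [hfdef, Finset.sum_apply] using this
  have hfnonneg : ∀ q ω, 0 ≤ f q ω := by
    intro q ω
    exact mul_nonneg (by positivity) (Finset.sum_nonneg fun i _ => hYnonneg q i ω)
  have hfmean : ∀ q, MeasurableSet q → ∫ ω, f q ω ∂P = (μ q).toReal := by
    intro q hq
    have h1 : ∫ ω, f q ω ∂P
        = (n : ℝ)⁻¹ * ∫ ω, ∑ i ∈ Finset.range n, Y q i ω ∂P := integral_const_mul _ _
    rw [h1, integral_finset_sum _ fun i _ => (hYmem q hq i).integrable one_le_two]
    simp only [fun i => hYint q hq i]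
    rw [Finset.sum_const, Finset.card_range, nsmul_eq_mul]
    field_simp
  have hfvar : ∀ q, MeasurableSet q → variance (f q) P ≤ (μ q).toReal / n := by
    intro q hq
    have h1 : variance (f q) P
        = (n : ℝ)⁻¹ ^ 2 * variance (fun ω => ∑ i ∈ Finset.range n, Y q i ω) P := by
      rw [hfdef]
      exact variance_const_mul _ _ _
    have h2 : variance (fun ω => ∑ i ∈ Finset.range n, Y q i ω) P
        = ∑ i ∈ Finset.range n, variance (Y q i) P := by
      have h := IndepFun.variance_sum (μ := P) (s := Finset.range n)
        (fun i _ => hYmem q hq i) (fun i _ j _ hij => (hYind q hq).indepFun hij)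
      rw [← h]
      congr 1
      ext ω
      simp [Finset.sum_apply]
    rw [h1, h2]
    calc (n : ℝ)⁻¹ ^ 2 * ∑ i ∈ Finset.range n, variance (Y q i) P
        ≤ (n : ℝ)⁻¹ ^ 2 * ∑ _i ∈ Finset.range n, (μ q).toReal := by
          gcongr with i hi
          exact hYvar q hq i
      _ = (μ q).toReal / n := by
          rw [Finset.sum_const, Finset.card_range, nsmul_eq_mul]
          field_simp
  -- per-q bounds
  have hZmem : ∀ q, MeasurableSet q → MemLp (fun ω => (μ q).toReal - f q ω) 2 P :=
    fun q hq => (memLp_const _).sub (hfmem q hq)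
  have hint : ∀ q, MeasurableSet q →
      Integrable (fun ω => |(μ q).toReal - f q ω|) P :=
    fun q hq => ((hZmem q hq).integrable one_le_two).abs
  have hb1 : ∀ q, MeasurableSet q →
      ∫ ω, |(μ q).toReal - f q ω| ∂P ≤ Real.sqrt ((μ q).toReal / n) := by
    intro q hq
    refine le_trans (aux_integral_abs_le_sqrt _ (hZmem q hq)) (Real.sqrt_le_sqrt ?_)
    have hveq : ∫ ω, ((μ q).toReal - f q ω) ^ 2 ∂P = variance (f q) P := by
      rw [variance_eq_integral (hfmem q hq).aestronglyMeasurable.aemeasurable]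
      apply integral_congr_ae
      filter_upwards with ω
      rw [hfmean q hq]
      ring_nf
    rw [hveq]
    exact hfvar q hq
  have hb2 : ∀ q, MeasurableSet q →
      ∫ ω, |(μ q).toReal - f q ω| ∂P ≤ 2 * (μ q).toReal := by
    intro q hq
    have hle : ∀ ω, |(μ q).toReal - f q ω| ≤ (μ q).toReal + f q ω := by
      intro ω
      rw [abs_sub_le_iff]
      constructor <;> nlinarith [hfnonneg q ω, ENNReal.toReal_nonneg (a := μ q)]
    calc ∫ ω, |(μ q).toReal - f q ω| ∂P
        ≤ ∫ ω, ((μ q).toReal + f q ω) ∂P := by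
          refine integral_mono (hint q hq) ?_ hle
          exact (integrable_const _).add ((hfmem q hq).integrable one_le_two)
      _ = 2 * (μ q).toReal := by
          rw [integral_add (integrable_const _) ((hfmem q hq).integrable one_le_two),
            integral_const, hfmean q hq]
          simp
          ring
  -- sums of measures
  have hsum_meas : ∀ T : Finset (Set X), T ⊆ Q → ∀ E : Set X,
      (∀ q ∈ T, q ⊆ E) → ∑ q ∈ T, (μ q).toReal ≤ (μ E).toReal := by
    intro T hTQ E hE
    have h1 : μ (⋃ q ∈ T, (id q : Set X)) = ∑ q ∈ T, μ q :=
      measure_biUnion_finset (hdisj.subset (by exact_mod_cast hTQ))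
        fun q hq => hmeasQ q (hTQ hq)
    have h2 : ∑ q ∈ T, (μ q).toReal = (∑ q ∈ T, μ q).toReal :=
      (ENNReal.toReal_sum fun q _ => measure_ne_top μ q).symm
    rw [h2, ← h1]
    exact ENNReal.toReal_mono (measure_ne_top μ E)
      (measure_mono (Set.iUnion₂_subset hE))
  set A := Q.filter (fun q => (q ∩ S).Nonempty) with hAdef
  set B := Q.filter (fun q => ¬ (q ∩ S).Nonempty) with hBdef
  have hswap : ∫ ω, (∑ q ∈ Q, |(μ q).toReal - (empMeas Xs n ω q).toReal|) ∂P
      = ∑ q ∈ Q, ∫ ω, |(μ q).toReal - f q ω| ∂P := by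
    rw [← integral_finset_sum _ fun q hq => hint q (hmeasQ q hq)]
    apply integral_congr_ae
    filter_upwards with ω
    exact Finset.sum_congr rfl fun q hq => by rw [hemp q (hmeasQ q hq) ω]
  have hcard : (Nat.card {q : Set X // q ∈ Q ∧ (q ∩ S).Nonempty} : ℝ) = A.card := by
    have h := Nat.card_congr
      (Equiv.subtypeEquivRight (p := fun q : Set X => q ∈ Q ∧ (q ∩ S).Nonempty)
        (q := fun q : Set X => q ∈ A)
        (fun q => by simp [hAdef, Finset.mem_filter]))
    rw [h, Nat.card_eq_finsetCard]
  -- bound the A part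
  have hApart : ∑ q ∈ A, ∫ ω, |(μ q).toReal - f q ω| ∂P
      ≤ Real.sqrt ((A.card : ℝ) / n) := by
    have hAsub : A ⊆ Q := Finset.filter_subset _ _
    have hsum1 : ∑ q ∈ A, (μ q).toReal ≤ 1 := by
      have := hsum_meas A hAsub Set.univ fun q _ => Set.subset_univ q
      simpa using this
    calc ∑ q ∈ A, ∫ ω, |(μ q).toReal - f q ω| ∂P
        ≤ ∑ q ∈ A, Real.sqrt ((μ q).toReal / n) :=
          Finset.sum_le_sum fun q hq => hb1 q (hmeasQ q (hAsub hq))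
      _ = ∑ q ∈ A, Real.sqrt ((μ q).toReal / n) * Real.sqrt 1 := by simp
      _ ≤ Real.sqrt (∑ q ∈ A, (μ q).toReal / n) * Real.sqrt (∑ _q ∈ A, (1 : ℝ)) :=
          Real.sum_sqrt_mul_sqrt_le _ (fun q => by positivity) (fun q => zero_le_one)
      _ = Real.sqrt ((∑ q ∈ A, (μ q).toReal / n) * A.card) := by
          rw [Finset.sum_const, nsmul_eq_mul, mul_one,
            ← Real.sqrt_mul (by positivity)]
      _ ≤ Real.sqrt ((A.card : ℝ) / n) := by
          apply Real.sqrt_le_sqrt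
          rw [← Finset.sum_div, div_mul_eq_mul_div]
          have hc : (0 : ℝ) ≤ (A.card : ℝ) := Nat.cast_nonneg _
          apply div_le_div_of_nonneg_right ?_ hnpos.le |>.trans_eq rfl
          nlinarith
  -- bound the B part
  have hcompl : (μ Sᶜ).toReal = 1 - (μ S).toReal := by
    rw [measure_compl hS (measure_ne_top _ _), measure_univ,
      ENNReal.toReal_sub_of_le prob_le_one one_ne_top]
    simp
  have hBpart : ∑ q ∈ B, ∫ ω, |(μ q).toReal - f q ω| ∂P
      ≤ 2 * (1 - (μ S).toReal) := by
    have hBsub : B ⊆ Q := Finset.filter_subset _ _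
    have hsub : ∀ q ∈ B, q ⊆ Sᶜ := by
      intro q hq
      have h := (Finset.mem_filter.1 hq).2
      rw [Set.not_nonempty_iff_eq_empty] at h
      intro x hx hxS
      exact absurd (Set.mem_inter hx hxS) (h ▸ Set.notMem_empty x)
    calc ∑ q ∈ B, ∫ ω, |(μ q).toReal - f q ω| ∂P
        ≤ ∑ q ∈ B, 2 * (μ q).toReal :=
          Finset.sum_le_sum fun q hq => hb2 q (hmeasQ q (hBsub hq))
      _ = 2 * ∑ q ∈ B, (μ q).toReal := by rw [Finset.mul_sum]
      _ ≤ 2 * (μ Sᶜ).toReal := by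
          have := hsum_meas B hBsub Sᶜ hsub
          linarith
      _ = 2 * (1 - (μ S).toReal) := by rw [hcompl]
  rw [hswap, ← Finset.sum_filter_add_sum_filter_not Q (fun q => (q ∩ S).Nonempty), hcard]
  linarith [hApart, hBpart]

end
end

section
/- Let μ be a Borel probability measure on a metric space (X, D) with diam(X) ≤ 1, and suppose there exist positive constants ε', τ, and t such that N_ε(μ, τ) ≥ ε^{-t} for all ε ≤ ε'. Then for any n > (ε')^{-t}, any p ∈ [1, ∞), and any probability measure ν supported on at most n points, W_p^p(μ, ν) ≥ τ 4^{-p} n^{-p/t}. -/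
open MeasureTheory Metric ENNReal Filter

noncomputable section

theorem stmt4 {X : Type*} [MetricSpace X] [MeasurableSpace X] [BorelSpace X]
    (hdiam : Metric.diam (Set.univ : Set X) ≤ 1)
    (μ : Measure X) [IsProbabilityMeasure μ]
    (ε' τ t : ℝ) (hε' : 0 < ε') (hτ : 0 < τ) (ht : 0 < t)
    (hcov : ∀ ε : ℝ, 0 < ε → ε ≤ ε' → ε ^ (-t) ≤ (covN μ ε τ : ℝ))
    (n : ℕ) (hn : ε' ^ (-t) < (n : ℝ))
    (p : ℝ) (hp : 1 ≤ p)
    (ν : Measure X) [IsProbabilityMeasure ν]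
    (T : Finset X) (hT : T.card ≤ n) (hνT : ν ((↑T : Set X)ᶜ) = 0) :
    ENNReal.ofReal (τ * (4 : ℝ) ^ (-p) * (n : ℝ) ^ (-(p / t))) ≤ Wpp p μ ν := by
  have hn0 : (0:ℝ) < n := lt_trans (Real.rpow_pos_of_pos hε' _) hn
  set ε : ℝ := (1/2) * (n:ℝ) ^ (-(1/t)) with hεdef
  have hnpow_pos : (0:ℝ) < (n:ℝ) ^ (-(1/t)) := Real.rpow_pos_of_pos hn0 _
  have hεpos : 0 < ε := by positivity
  -- ε ≤ ε'
  have h1 : (n:ℝ) ^ (-(1/t)) < ε' := by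
    have h2 : (n:ℝ) ^ (-(1/t)) < (ε' ^ (-t)) ^ (-(1/t)) :=
      Real.rpow_lt_rpow_of_neg (Real.rpow_pos_of_pos hε' _) hn (by
        simp only [neg_lt, neg_zero]; positivity)
    have h3 : (ε' ^ (-t)) ^ (-(1/t)) = ε' := by
      rw [← Real.rpow_mul hε'.le, show (-t)*(-(1/t)) = 1 by field_simp, Real.rpow_one]
    linarith
  have hεle : ε ≤ ε' := by
    have : ε < (n:ℝ) ^ (-(1/t)) := by
      rw [hεdef]; nlinarith
    linarith
  -- ε ^ (-t) = 2^t * n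
  have hεpow : ε ^ (-t) = (2:ℝ) ^ t * n := by
    rw [hεdef, Real.mul_rpow (by norm_num) hnpow_pos.le, ← Real.rpow_mul hn0.le]
    rw [one_div, Real.inv_rpow (by norm_num : (0:ℝ) ≤ 2), ← Real.rpow_neg (by norm_num : (0:ℝ) ≤ 2)]
    rw [show (-(1/t))*(-t) = 1 by field_simp, Real.rpow_one]
    norm_num
  -- covN > n
  have hcovn : (n:ℝ) < (covN μ ε τ : ℝ) := by
    have := hcov ε hεpos hεle
    have h2 : (1:ℝ) < (2:ℝ) ^ t := Real.one_lt_rpow_iff_of_pos (by norm_num) |>.2 (Or.inl ⟨by norm_num, ht⟩)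
    nlinarith
  classical
  set S : Set X := ⋃ x ∈ T, Metric.closedBall x (ε/2) with hSdef
  have hSmeas : MeasurableSet S := by
    apply MeasurableSet.biUnion T.countable_toSet
    intro x _; exact measurableSet_closedBall
  have hSμ : ¬ (ENNReal.ofReal (1 - τ) ≤ μ S) := by
    intro h
    have hmem : T.card ∈ {m | ∃ S : Set X, MeasurableSet S ∧ ENNReal.ofReal (1 - τ) ≤ μ S ∧
        ∃ F : Finset X, F.card = m ∧ S ⊆ ⋃ x ∈ F, Metric.closedBall x (ε / 2)} :=
      ⟨S, hSmeas, h, T, rfl, le_refl _⟩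
    have h3 := Nat.sInf_le hmem
    have h4 : (covN μ ε τ : ℝ) ≤ (T.card : ℝ) := by exact_mod_cast h3
    have h5 : (T.card : ℝ) ≤ n := by exact_mod_cast hT
    linarith
  have hτ1 : τ < 1 := by
    by_contra h
    exact hSμ (by rw [ENNReal.ofReal_eq_zero.2 (by linarith)]; exact zero_le)
  have hμSc : ENNReal.ofReal τ ≤ μ Sᶜ := by
    push_neg at hSμ
    rw [prob_compl_eq_one_sub hSmeas]
    calc ENNReal.ofReal τ = ENNReal.ofReal (1-(1-τ)) := by norm_num
      _ = 1 - ENNReal.ofReal (1-τ) := by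
          rw [ENNReal.ofReal_sub _ (by linarith), ENNReal.ofReal_one]
      _ ≤ 1 - μ S := tsub_le_tsub_left hSμ.le 1
  -- the cost bound
  have hc : (ε/2)^p = (4:ℝ)^(-p) * (n:ℝ)^(-(p/t)) := by
    rw [hεdef, show (1/2 * (n:ℝ)^(-(1/t)))/2 = 4⁻¹ * (n:ℝ)^(-(1/t)) by ring,
      Real.mul_rpow (by norm_num) hnpow_pos.le,
      Real.inv_rpow (by norm_num : (0:ℝ) ≤ 4), ← Real.rpow_neg (by norm_num : (0:ℝ) ≤ 4),
      ← Real.rpow_mul hn0.le, show (-(1/t))*p = -(p/t) by ring]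
  rw [Wpp]
  refine le_iInf fun γ => le_iInf fun hγ1 => le_iInf fun hγ2 => ?_
  have hTmeas : MeasurableSet (↑T : Set X) := T.finite_toSet.measurableSet
  have hsnd : γ (Prod.snd ⁻¹' (↑T : Set X)ᶜ) = 0 := by
    rw [← Measure.map_apply measurable_snd hTmeas.compl, hγ2, hνT]
  set A : Set (X × X) := (Prod.fst ⁻¹' Sᶜ) ∩ (Prod.snd ⁻¹' (↑T : Set X)) with hAdef
  have hAmeas : MeasurableSet A :=
    (measurable_fst hSmeas.compl).inter (measurable_snd hTmeas)
  have hγA : ENNReal.ofReal τ ≤ γ A := by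
    have hA' : A = (Prod.fst ⁻¹' Sᶜ) \ (Prod.snd ⁻¹' (↑T : Set X)ᶜ) := by
      ext z; simp [hAdef, Set.mem_diff]
    rw [hA', measure_diff_null hsnd, ← Measure.map_apply measurable_fst hSmeas.compl, hγ1]
    exact hμSc
  calc ENNReal.ofReal (τ * (4 : ℝ) ^ (-p) * (n : ℝ) ^ (-(p / t)))
      = ENNReal.ofReal ((ε/2)^p) * ENNReal.ofReal τ := by
        rw [← ENNReal.ofReal_mul (by positivity), hc]; ring_nf
    _ ≤ ENNReal.ofReal ((ε/2)^p) * γ A := mul_le_mul_right hγA _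
    _ = ∫⁻ z, A.indicator (fun _ => ENNReal.ofReal ((ε/2)^p)) z ∂γ := by
        rw [lintegral_indicator_const hAmeas]
    _ ≤ ∫⁻ z, ENNReal.ofReal (dist z.1 z.2 ^ p) ∂γ := by
        apply lintegral_mono
        intro z
        by_cases hz : z ∈ A
        · rw [Set.indicator_of_mem hz]
          obtain ⟨hz1, hz2⟩ := hz
          have hd : ε/2 < dist z.1 z.2 := by
            by_contra hd
            push_neg at hd
            exact hz1 (Set.mem_biUnion hz2 (by rwa [Metric.mem_closedBall]))
          exact ENNReal.ofReal_le_ofReal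
            (Real.rpow_le_rpow (by positivity) hd.le (by linarith))
        · rw [Set.indicator_of_notMem hz]; exact zero_le

end
end

section
/- Let μ be a Borel probability measure on a compact metric space and p ∈ [1, ∞). If the Minkowski dimension d_M(μ) satisfies d_M(μ) ≥ 2p, then the upper Wasserstein dimension satisfies d_p^*(μ) ≤ d_M(μ). -/
open MeasureTheory Metric ENNReal Filter

noncomputable section

/-- The upper Wasserstein dimension
`d_p^*(μ) = inf {s ∈ (2p, ∞) : limsup_{ε → 0} d_ε(μ, ε^{sp/(s-2p)}) ≤ s}`. -/
noncomputable def dUpper {X : Type*} [MeasurableSpace X] [PseudoMetricSpace X]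
    (μ : Measure X) (p : ℝ) : ℝ :=
  sInf {s : ℝ | 2 * p < s ∧
    Filter.limsup (fun ε => dEps μ ε (ε ^ (s * p / (s - 2 * p)))) (nhdsWithin 0 (Set.Ioi 0)) ≤ s}

/-- The Minkowski (box-counting) dimension of a set. -/
noncomputable def dimMink {X : Type*} [PseudoMetricSpace X] (S : Set X) : ℝ :=
  Filter.limsup (fun ε => Real.log (coveringNumber ε S) / (- Real.log ε))
    (nhdsWithin 0 (Set.Ioi 0))

/-- The Minkowski dimension of a measure: `d_M(μ) = inf {dim_M S : μ S = 1}`. -/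
noncomputable def dMink {X : Type*} [MeasurableSpace X] [PseudoMetricSpace X]
    (μ : Measure X) : ℝ :=
  sInf {d : ℝ | ∃ S : Set X, μ S = 1 ∧ dimMink S = d}


lemma limsup_nonneg_aux (h : ℝ → ℝ) (hh : ∀ ε ∈ Set.Ioo (0:ℝ) 1, 0 ≤ h ε) :
    0 ≤ Filter.limsup h (nhdsWithin 0 (Set.Ioi 0)) := by
  rw [Filter.limsup_eq]
  rcases Set.eq_empty_or_nonempty {a | ∀ᶠ ε in nhdsWithin (0:ℝ) (Set.Ioi 0), h ε ≤ a} with he | hne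
  · rw [he, Real.sInf_empty]
  · refine le_csInf hne fun a ha => ?_
    have hIoo : ∀ᶠ ε in nhdsWithin (0:ℝ) (Set.Ioi 0), ε ∈ Set.Ioo (0:ℝ) 1 :=
      Ioo_mem_nhdsGT_of_mem (by norm_num)
    have ha' : ∀ᶠ ε in nhdsWithin (0:ℝ) (Set.Ioi 0), h ε ≤ a := ha
    obtain ⟨ε, h1, h2⟩ := (ha'.and hIoo).exists
    exact le_trans (hh ε h2) h1

lemma covering_facts {X : Type*} [MetricSpace X] [CompactSpace X] [MeasurableSpace X]
    [BorelSpace X] (μ : Measure X) [IsProbabilityMeasure μ] {S : Set X} (hS : μ S = 1)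
    {ε τ : ℝ} (hε : 0 < ε) (hτ : 0 ≤ τ) :
    covN μ ε τ ≤ coveringNumber ε S ∧ 1 ≤ coveringNumber ε S := by
  have hne : {m | ∃ F : Finset X, F.card = m ∧ S ⊆ ⋃ x ∈ F, Metric.closedBall x (ε / 2)}.Nonempty := by
    obtain ⟨t, -, htf, hcov⟩ := (isCompact_univ : IsCompact (Set.univ : Set X)).finite_cover_balls
      (show (0:ℝ) < ε/2 by linarith)
    refine ⟨htf.toFinset.card, htf.toFinset, rfl, ?_⟩
    refine (Set.subset_univ S).trans (hcov.trans ?_)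
    refine Set.iUnion₂_subset fun x hx => ?_
    exact Set.subset_iUnion₂_of_subset x (by simpa using hx) ball_subset_closedBall
  obtain ⟨F, hcard, hcov⟩ := Nat.sInf_mem hne
  have hSne : S.Nonempty := by
    rcases Set.eq_empty_or_nonempty S with rfl | h
    · simp at hS
    · exact h
  constructor
  · apply Nat.sInf_le
    refine ⟨⋃ x ∈ F, Metric.closedBall x (ε / 2), ?_, ?_, F, hcard, subset_rfl⟩
    · exact MeasurableSet.biUnion F.countable_toSet fun x _ =>
        measurableSet_closedBall
    · calc ENNReal.ofReal (1 - τ) ≤ ENNReal.ofReal 1 := by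
            exact ENNReal.ofReal_le_ofReal (by linarith)
        _ = μ S := by rw [hS]; simp
        _ ≤ _ := measure_mono hcov
  · obtain ⟨x, hx⟩ := hSne
    have := hcov hx
    simp only [Set.mem_iUnion] at this
    obtain ⟨y, hy, -⟩ := this
    rw [_root_.coveringNumber, ← hcard]
    exact Finset.card_pos.mpr ⟨y, hy⟩

theorem stmt6 {X : Type*} [MetricSpace X] [CompactSpace X] [MeasurableSpace X] [BorelSpace X]
    (μ : Measure X) [IsProbabilityMeasure μ] (p : ℝ) (hp : 1 ≤ p)
    (h : 2 * p ≤ dMink μ) :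
    dUpper μ p ≤ dMink μ := by
  have hp0 : (0:ℝ) < p := by linarith
  have hdimnn : ∀ S : Set X, 0 ≤ dimMink S := by
    intro S
    apply limsup_nonneg_aux
    intro ε hε
    apply div_nonneg (Real.log_natCast_nonneg _)
    have := Real.log_neg hε.1 hε.2
    linarith
  have hDne : {d : ℝ | ∃ S : Set X, μ S = 1 ∧ dimMink S = d}.Nonempty :=
    ⟨dimMink (Set.univ : Set X), Set.univ, measure_univ, rfl⟩
  have hDbdd : BddBelow {d : ℝ | ∃ S : Set X, μ S = 1 ∧ dimMink S = d} := by
    refine ⟨0, ?_⟩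
    rintro d ⟨S, -, rfl⟩
    exact hdimnn S
  have key : ∀ s : ℝ, dMink μ < s → s ∈ {s : ℝ | 2 * p < s ∧
      Filter.limsup (fun ε => dEps μ ε (ε ^ (s * p / (s - 2 * p))))
        (nhdsWithin 0 (Set.Ioi 0)) ≤ s} := by
    intro s hs
    have h2ps : 2 * p < s := lt_of_le_of_lt h hs
    have hs' : sInf {d : ℝ | ∃ S : Set X, μ S = 1 ∧ dimMink S = d} < s := hs
    obtain ⟨d, ⟨S, hS1, rfl⟩, hds⟩ := (csInf_lt_iff hDbdd hDne).mp hs'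
    have hdim2p : 2 * p ≤ dimMink S := h.trans (csInf_le hDbdd ⟨S, hS1, rfl⟩)
    set g : ℝ → ℝ := fun ε => Real.log (coveringNumber ε S) / (- Real.log ε) with hg
    set B := {a : ℝ | ∀ᶠ ε in nhdsWithin (0:ℝ) (Set.Ioi 0), g ε ≤ a} with hB
    have hgB : dimMink S = sInf B := by rw [dimMink, Filter.limsup_eq]
    have hgnn : ∀ ε ∈ Set.Ioo (0:ℝ) 1, 0 ≤ g ε := by
      intro ε hε
      apply div_nonneg (Real.log_natCast_nonneg _)
      have := Real.log_neg hε.1 hε.2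
      linarith
    have hBbdd : BddBelow B := by
      refine ⟨0, fun a ha => ?_⟩
      have hIoo : ∀ᶠ ε in nhdsWithin (0:ℝ) (Set.Ioi 0), ε ∈ Set.Ioo (0:ℝ) 1 :=
        Ioo_mem_nhdsGT_of_mem (by norm_num)
      have ha' : ∀ᶠ ε in nhdsWithin (0:ℝ) (Set.Ioi 0), g ε ≤ a := ha
      obtain ⟨ε, h1, h2⟩ := (ha'.and hIoo).exists
      exact le_trans (hgnn ε h2) h1
    have hBne : B.Nonempty := by
      by_contra hBe
      rw [Set.not_nonempty_iff_eq_empty] at hBe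
      rw [hgB, hBe, Real.sInf_empty] at hdim2p
      linarith
    obtain ⟨b, hbB, hbs⟩ := (csInf_lt_iff hBbdd hBne).mp (hgB ▸ hds)
    refine ⟨h2ps, ?_⟩
    have hfg : ∀ᶠ ε in nhdsWithin (0:ℝ) (Set.Ioi 0),
        dEps μ ε (ε ^ (s * p / (s - 2 * p))) ≤ b := by
      have hIoo : ∀ᶠ ε in nhdsWithin (0:ℝ) (Set.Ioi 0), ε ∈ Set.Ioo (0:ℝ) 1 :=
        Ioo_mem_nhdsGT_of_mem (by norm_num)
      have hbB' : ∀ᶠ ε in nhdsWithin (0:ℝ) (Set.Ioi 0), g ε ≤ b := hbB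
      filter_upwards [hIoo, hbB'] with ε hε hgb
      have hε0 : (0:ℝ) < ε := hε.1
      have hε1 : ε < 1 := hε.2
      have hτ : 0 ≤ ε ^ (s * p / (s - 2 * p)) := Real.rpow_nonneg hε0.le _
      obtain ⟨hcle, hc1⟩ := covering_facts μ hS1 hε0 hτ
      have hlog : Real.log ε < 0 := Real.log_neg hε0 hε1
      have hnum : Real.log (covN μ ε (ε ^ (s * p / (s - 2 * p))) : ℝ) ≤
          Real.log (coveringNumber ε S : ℝ) := by
        rcases Nat.eq_zero_or_pos (covN μ ε (ε ^ (s * p / (s - 2 * p)))) with h0 | hpos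
        · rw [h0]
          simpa using Real.log_natCast_nonneg (coveringNumber ε S)
        · exact Real.log_le_log (by exact_mod_cast hpos) (by exact_mod_cast hcle)
      have : dEps μ ε (ε ^ (s * p / (s - 2 * p))) ≤ g ε := by
        rw [dEps, hg]
        exact div_le_div_of_nonneg_right hnum (by linarith) |>.trans_eq rfl
      exact this.trans hgb
    have hfnn : ∀ ε ∈ Set.Ioo (0:ℝ) 1, 0 ≤ dEps μ ε (ε ^ (s * p / (s - 2 * p))) := by
      intro ε hε
      apply div_nonneg (Real.log_natCast_nonneg _)
      have := Real.log_neg hε.1 hε.2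
      linarith
    rw [Filter.limsup_eq]
    have hAbdd : BddBelow {a : ℝ | ∀ᶠ ε in nhdsWithin (0:ℝ) (Set.Ioi 0),
        dEps μ ε (ε ^ (s * p / (s - 2 * p))) ≤ a} := by
      refine ⟨0, fun a ha => ?_⟩
      have hIoo : ∀ᶠ ε in nhdsWithin (0:ℝ) (Set.Ioi 0), ε ∈ Set.Ioo (0:ℝ) 1 :=
        Ioo_mem_nhdsGT_of_mem (by norm_num)
      have ha' : ∀ᶠ ε in nhdsWithin (0:ℝ) (Set.Ioi 0),
          dEps μ ε (ε ^ (s * p / (s - 2 * p))) ≤ a := ha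
      obtain ⟨ε, h1, h2⟩ := (ha'.and hIoo).exists
      exact le_trans (hfnn ε h2) h1
    exact le_trans (csInf_le hAbdd hfg) hbs.le
  have hfin : ∀ δ > (0:ℝ), dUpper μ p ≤ dMink μ + δ := by
    intro δ hδ
    have hmem := key (dMink μ + δ) (by linarith)
    exact csInf_le ⟨2 * p, fun t ht => le_of_lt ht.1⟩ hmem
  exact le_of_forall_pos_le_add hfin


end
end

section
/- Let μ be a Borel probability measure on a compact metric space and p ∈ [1, ∞). If t < d_*(μ), then there is a constant c > 0 such that for every n and every probability measure ν supported on at most n points, W_p(μ, ν) ≥ c n^{−1/t}. In particular W_p(μ, μ̂_n) ≥ c n^{−1/t} almost surely. -/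
open MeasureTheory Metric ENNReal Filter

noncomputable section

/-- `d_*(μ) = lim_{τ → 0} liminf_{ε → 0} d_ε(μ, τ)`; since the inner liminf is monotone in `τ`,
the limit equals the supremum over `τ > 0`. -/
noncomputable def dLower {X : Type*} [MeasurableSpace X] [PseudoMetricSpace X]
    (μ : Measure X) : ℝ :=
  ⨆ τ ∈ Set.Ioi (0 : ℝ), Filter.liminf (fun ε => dEps μ ε τ) (nhdsWithin 0 (Set.Ioi 0))

/-- If `t < d_*(μ)` (equivalently, `t` is below one of the liminfs whose supremum defines
`d_*(μ)`), then `W_p(μ, ν) ≳ n^{-1/t}` for every measure `ν` on at most `n` points; in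
particular this holds for the empirical measure `μ̂_n`. -/
theorem stmt9 {X : Type*} [MetricSpace X] [CompactSpace X] [MeasurableSpace X] [BorelSpace X]
    (hdiam : Metric.diam (Set.univ : Set X) ≤ 1)
    (μ : Measure X) [IsProbabilityMeasure μ]
    (p t : ℝ) (hp : 1 ≤ p) (ht : 0 < t)
    (hlt : ∃ τ : ℝ, 0 < τ ∧
      t < Filter.liminf (fun ε => dEps μ ε τ) (nhdsWithin 0 (Set.Ioi 0))) :
    ∃ c : ℝ, 0 < c ∧ ∀ n : ℕ, 1 ≤ n →
      ∀ ν : Measure X, IsProbabilityMeasure ν →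
        (∃ T : Finset X, T.card ≤ n ∧ ν ((↑T : Set X)ᶜ) = 0) →
          ENNReal.ofReal (c * (n : ℝ) ^ (-(1 / t))) ≤ (Wpp p μ ν) ^ (1 / p) := by
  classical
  obtain ⟨τ, hτ, hlim⟩ := hlt
  have hp0 : (0:ℝ) < p := lt_of_lt_of_le one_pos hp
  have hbdd : Filter.IsBoundedUnder (· ≥ ·) (nhdsWithin (0:ℝ) (Set.Ioi 0))
      (fun ε => dEps μ ε τ) := by
    refine Filter.isBoundedUnder_of_eventually_ge (a := (0:ℝ)) ?_
    filter_upwards [Ioo_mem_nhdsGT_of_mem (Set.left_mem_Ico.2 one_pos)] with ε hε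
    exact div_nonneg (Real.log_natCast_nonneg _)
      (by simpa using Real.log_nonpos hε.1.le hε.2.le)
  have hev : ∀ᶠ ε in nhdsWithin (0:ℝ) (Set.Ioi 0), t < dEps μ ε τ :=
    Filter.eventually_lt_of_lt_liminf hlim hbdd
  obtain ⟨ε0, hε0, hIoo⟩ := mem_nhdsGT_iff_exists_Ioo_subset.1 hev
  rw [Set.mem_Ioi] at hε0
  set δ : ℝ := min ε0 1 / 2 with hδdef
  have hδ0 : 0 < δ := by positivity
  have hδε0 : δ < ε0 := by
    have h1 : min ε0 1 ≤ ε0 := min_le_left _ _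
    have h2 : 0 < min ε0 1 := lt_min hε0 one_pos
    rw [hδdef]; linarith
  have hδ1 : δ < 1 := by
    have h1 : min ε0 1 ≤ 1 := min_le_right _ _
    rw [hδdef]; linarith
  refine ⟨δ / 2 * τ ^ (1 / p), by positivity, ?_⟩
  rintro n hn ν hν ⟨T, hTcard, hνT⟩
  have hn1 : (1:ℝ) ≤ (n:ℝ) := by exact_mod_cast hn
  set r : ℝ := (n : ℝ) ^ (-(1 / t)) with hrdef
  have hr0 : 0 < r := Real.rpow_pos_of_pos (by linarith) _
  have hr1 : r ≤ 1 := Real.rpow_le_one_of_one_le_of_nonpos hn1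
    (by simp [one_div, ht.le, inv_nonneg.2 ht.le])
  set ε : ℝ := δ * r with hεdef
  have hε_pos : 0 < ε := by positivity
  have hε_le : ε ≤ δ := by
    calc ε = δ * r := rfl
    _ ≤ δ * 1 := by nlinarith
    _ = δ := mul_one δ
  have hε1 : ε < 1 := lt_of_le_of_lt hε_le hδ1
  have ht' : t < dEps μ ε τ := hIoo ⟨hε_pos, lt_of_le_of_lt hε_le hδε0⟩
  -- covering number lower bound: (n : ℝ) < covN μ ε τ
  have hlogε : Real.log ε < 0 := Real.log_neg hε_pos hε1
  have hlt1 : t * (-Real.log ε) < Real.log (covN μ ε τ) := by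
    rw [dEps, lt_div_iff₀ (by linarith : (0:ℝ) < -Real.log ε)] at ht'
    exact ht'
  have hcovpos : 0 < ((covN μ ε τ : ℕ) : ℝ) := by
    by_contra h
    push_neg at h
    have h0 : ((covN μ ε τ : ℕ) : ℝ) = 0 := le_antisymm h (by positivity)
    rw [h0, Real.log_zero] at hlt1
    nlinarith
  have hεt : ε ^ (-t) < ((covN μ ε τ : ℕ) : ℝ) := by
    have hlog : Real.log (ε ^ (-t)) = -t * Real.log ε := Real.log_rpow hε_pos _
    have hl : Real.log (ε ^ (-t)) < Real.log ((covN μ ε τ : ℕ) : ℝ) := by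
      rw [hlog]; nlinarith
    exact (Real.log_lt_log_iff (Real.rpow_pos_of_pos hε_pos _) hcovpos).1 hl
  have hnεt : (n : ℝ) ≤ ε ^ (-t) := by
    have hrpow : r ^ (-t) = (n : ℝ) := by
      rw [hrdef, ← Real.rpow_mul (by linarith : (0:ℝ) ≤ (n:ℝ))]
      have : -(1 / t) * -t = 1 := by field_simp
      rw [this, Real.rpow_one]
    have hεeq : ε ^ (-t) = δ ^ (-t) * (n : ℝ) := by
      rw [hεdef, Real.mul_rpow hδ0.le hr0.le, hrpow]
    have hδt : 1 ≤ δ ^ (-t) :=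
      Real.one_le_rpow_of_pos_of_le_one_of_nonpos hδ0 hδ1.le (by linarith)
    rw [hεeq]; nlinarith
  have hncov : n < covN μ ε τ := by
    have hc : (n : ℝ) < ((covN μ ε τ : ℕ) : ℝ) := lt_of_le_of_lt hnεt hεt
    exact_mod_cast hc
  -- the bad set U and its complement
  set U : Set X := ⋃ x ∈ T, Metric.closedBall x (ε / 2) with hUdef
  have hU : MeasurableSet U :=
    MeasurableSet.biUnion T.countable_toSet (fun x _ => measurableSet_closedBall)
  have hμU : μ U < ENNReal.ofReal (1 - τ) := by
    by_contra h
    push_neg at h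
    have hmem : covN μ ε τ ≤ T.card := Nat.sInf_le ⟨U, hU, h, T, rfl, subset_rfl⟩
    omega
  have hτ1 : τ < 1 := by
    by_contra h
    push_neg at h
    rw [ENNReal.ofReal_eq_zero.2 (by linarith)] at hμU
    exact (not_lt_of_ge zero_le) hμU
  have hμUc : ENNReal.ofReal τ ≤ μ Uᶜ := by
    have hsum : μ U + μ Uᶜ = 1 := by
      rw [measure_add_measure_compl hU, measure_univ]
    have hle : ENNReal.ofReal τ + μ U ≤ μ Uᶜ + μ U := by
      rw [add_comm (μ Uᶜ), hsum]
      calc ENNReal.ofReal τ + μ U ≤ ENNReal.ofReal τ + ENNReal.ofReal (1 - τ) :=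
            add_le_add_right hμU.le _
      _ = ENNReal.ofReal 1 := by
            rw [← ENNReal.ofReal_add hτ.le (by linarith)]; norm_num
      _ = 1 := ENNReal.ofReal_one
    exact (ENNReal.add_le_add_iff_right (measure_ne_top μ U)).1 hle
  -- key coupling bound
  have hTm : MeasurableSet (↑T : Set X) := T.finite_toSet.measurableSet
  have key : ∀ γ : Measure (X × X), γ.map Prod.fst = μ → γ.map Prod.snd = ν →
      ENNReal.ofReal ((ε / 2) ^ p * τ) ≤ ∫⁻ z, ENNReal.ofReal (dist z.1 z.2 ^ p) ∂γ := by
    intro γ hγ1 hγ2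
    set A : Set (X × X) := Uᶜ ×ˢ (↑T : Set X) with hAdef
    have hfst : γ (Prod.fst ⁻¹' Uᶜ) = μ Uᶜ := by
      rw [← hγ1, Measure.map_apply measurable_fst hU.compl]
    have hsnd : γ (Prod.snd ⁻¹' (↑T : Set X)ᶜ) = 0 := by
      rw [← hγ2, Measure.map_apply measurable_snd hTm.compl] at hνT
      exact hνT
    have hγA : ENNReal.ofReal τ ≤ γ A := by
      have hsub : Prod.fst ⁻¹' Uᶜ ⊆ A ∪ Prod.snd ⁻¹' (↑T : Set X)ᶜ := by
        rintro ⟨x, y⟩ hz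
        by_cases hy : y ∈ (↑T : Set X)
        · exact Or.inl ⟨hz, hy⟩
        · exact Or.inr hy
      calc ENNReal.ofReal τ ≤ μ Uᶜ := hμUc
      _ = γ (Prod.fst ⁻¹' Uᶜ) := hfst.symm
      _ ≤ γ (A ∪ Prod.snd ⁻¹' (↑T : Set X)ᶜ) := measure_mono hsub
      _ ≤ γ A + γ (Prod.snd ⁻¹' (↑T : Set X)ᶜ) := measure_union_le _ _
      _ = γ A := by rw [hsnd, add_zero]
    have hmeas : Measurable fun z : X × X => ENNReal.ofReal (dist z.1 z.2 ^ p) := by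
      apply Measurable.ennreal_ofReal
      exact (Continuous.rpow_const (continuous_fst.dist continuous_snd)
        (fun z => Or.inr hp0.le)).measurable
    calc ENNReal.ofReal ((ε / 2) ^ p * τ)
        = ENNReal.ofReal ((ε / 2) ^ p) * ENNReal.ofReal τ :=
          ENNReal.ofReal_mul (by positivity)
    _ ≤ ENNReal.ofReal ((ε / 2) ^ p) * γ A := mul_le_mul_right hγA _
    _ = ∫⁻ _ in A, ENNReal.ofReal ((ε / 2) ^ p) ∂γ := (setLIntegral_const _ _).symm
    _ ≤ ∫⁻ z in A, ENNReal.ofReal (dist z.1 z.2 ^ p) ∂γ := by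
          refine setLIntegral_mono hmeas ?_
          rintro ⟨x, y⟩ ⟨hx, hy⟩
          have hd : ε / 2 ≤ dist x y := by
            by_contra hcon
            push_neg at hcon
            exact hx (Set.mem_biUnion hy (Metric.mem_closedBall.2 hcon.le))
          exact ENNReal.ofReal_le_ofReal
            (Real.rpow_le_rpow (by positivity) hd hp0.le)
    _ ≤ ∫⁻ z, ENNReal.ofReal (dist z.1 z.2 ^ p) ∂γ := setLIntegral_le_lintegral _ _
  have hW : ENNReal.ofReal ((ε / 2) ^ p * τ) ≤ Wpp p μ ν :=
    le_iInf fun γ => le_iInf fun h1 => le_iInf fun h2 => key γ h1 h2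
  have hWp : ENNReal.ofReal (((ε / 2) ^ p * τ) ^ (1 / p)) ≤ (Wpp p μ ν) ^ (1 / p) := by
    calc ENNReal.ofReal (((ε / 2) ^ p * τ) ^ (1 / p))
        = (ENNReal.ofReal ((ε / 2) ^ p * τ)) ^ (1 / p) :=
          (ENNReal.ofReal_rpow_of_nonneg (by positivity) (by positivity)).symm
    _ ≤ (Wpp p μ ν) ^ (1 / p) := ENNReal.rpow_le_rpow hW (by positivity)
  have hreal : ((ε / 2) ^ p * τ) ^ (1 / p) = δ / 2 * τ ^ (1 / p) * r := by
    rw [Real.mul_rpow (by positivity) hτ.le, ← Real.rpow_mul (by positivity : (0:ℝ) ≤ ε / 2),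
      mul_one_div_cancel hp0.ne', Real.rpow_one, hεdef]
    ring
  rw [← hreal]
  exact hWp
end
end

section
/- Let μ be a Borel probability measure whose support is a regular set of dimension d and with μ absolutely continuous with respect to the d-dimensional Hausdorff measure. Then for any p ∈ [1, d/2], d_*(μ) = d_p^*(μ) = d. -/
open MeasureTheory Metric ENNReal Filter

noncomputable section

/-- A compact set `S` is regular of dimension `d`: the `d`-dimensional Hausdorff measure of
balls around points of `S` is comparable to `r^d`. -/
def IsRegularSet {X : Type*} [MetricSpace X] [MeasurableSpace X] [BorelSpace X]
    (S : Set X) (d : ℝ) : Prop :=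
  IsCompact S ∧ ∃ c r0 : ℝ, 0 < c ∧ 0 < r0 ∧ ∀ x ∈ S, ∀ r : ℝ, 0 < r → r ≤ r0 →
    ENNReal.ofReal (r ^ d / c) ≤ μH[d] (S ∩ Metric.closedBall x r) ∧
      μH[d] (S ∩ Metric.closedBall x r) ≤ ENNReal.ofReal (c * r ^ d)

lemma aux_eps_delta {α : Type*} [MeasurableSpace α] (μ ν : Measure α) [IsFiniteMeasure μ]
    (hac : μ ≪ ν) (b : ℝ≥0∞) (hb : 0 < b) :
    ∃ δ : ℝ, 0 < δ ∧ ∀ A, MeasurableSet A → b ≤ μ A → ENNReal.ofReal δ ≤ ν A := by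
  by_contra hcon
  push_neg at hcon
  have key : ∀ n : ℕ, ∃ A, MeasurableSet A ∧ b ≤ μ A ∧ ν A < (2⁻¹ : ℝ≥0∞) ^ n := by
    intro n
    obtain ⟨A, hAm, hAμ, hAν⟩ := hcon ((1/2) ^ n) (by positivity)
    refine ⟨A, hAm, hAμ, ?_⟩
    calc ν A < ENNReal.ofReal ((1/2) ^ n) := hAν
    _ = (2⁻¹ : ℝ≥0∞) ^ n := by
        rw [ENNReal.ofReal_pow (by norm_num)]
        congr 1
        rw [show (1/2:ℝ) = 2⁻¹ by norm_num, ENNReal.ofReal_inv_of_pos (by norm_num)]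
        norm_num
  choose A hAm hAμ hAν using key
  set B : ℕ → Set α := fun n => ⋃ k, A (n + k) with hB
  have hBm : ∀ n, MeasurableSet (B n) := fun n => MeasurableSet.iUnion fun k => hAm _
  have hBanti : Antitone B := by
    refine antitone_nat_of_succ_le fun n => Set.iUnion_subset fun k => ?_
    have : A (n + 1 + k) = A (n + (k + 1)) := by ring_nf
    rw [this]
    exact Set.subset_iUnion (fun k => A (n + k)) (k + 1)
  have hνB : ∀ n, ν (B n) ≤ 2 * (2⁻¹ : ℝ≥0∞) ^ n := by
    intro n
    calc ν (B n) ≤ ∑' k, ν (A (n + k)) := measure_iUnion_le _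
    _ ≤ ∑' k : ℕ, (2⁻¹ : ℝ≥0∞) ^ (n + k) := ENNReal.tsum_le_tsum fun k => (hAν _).le
    _ = (2⁻¹ : ℝ≥0∞) ^ n * ∑' k : ℕ, (2⁻¹ : ℝ≥0∞) ^ k := by
        rw [← ENNReal.tsum_mul_left]
        congr 1; ext k; rw [pow_add]
    _ = (2⁻¹ : ℝ≥0∞) ^ n * 2 := by
        rw [ENNReal.tsum_geometric]
        congr 1
        have h2 : (1 : ℝ≥0∞) - 2⁻¹ = 2⁻¹ := by
          rw [ENNReal.sub_eq_of_eq_add (by simp)]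
          rw [ENNReal.inv_two_add_inv_two]
        rw [h2, inv_inv]
    _ = 2 * (2⁻¹ : ℝ≥0∞) ^ n := mul_comm _ _
  have hνlim : ν (⋂ n, B n) = 0 := by
    have htend : Tendsto (fun n : ℕ => 2 * (2⁻¹ : ℝ≥0∞) ^ n) atTop (nhds 0) := by
      have h := ENNReal.tendsto_pow_atTop_nhds_zero_of_lt_one
        (r := (2⁻¹ : ℝ≥0∞)) (by simp [ENNReal.inv_lt_one, ENNReal.one_lt_two])
      have := ENNReal.Tendsto.const_mul (a := (2:ℝ≥0∞)) h
        (Or.inr (by norm_num : (2:ℝ≥0∞) ≠ ⊤))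
      simpa using this
    have hle : ∀ n, ν (⋂ m, B m) ≤ 2 * (2⁻¹ : ℝ≥0∞) ^ n :=
      fun n => (measure_mono (Set.iInter_subset B n)).trans (hνB n)
    exact le_antisymm (ge_of_tendsto htend (Filter.Eventually.of_forall hle)) zero_le
  have hμlim : b ≤ μ (⋂ n, B n) := by
    have htend : Tendsto (fun n => μ (B n)) atTop (nhds (μ (⋂ n, B n))) :=
      tendsto_measure_iInter_atTop (fun n => (hBm n).nullMeasurableSet) hBanti
        ⟨0, measure_ne_top μ _⟩
    refine ge_of_tendsto htend (Filter.Eventually.of_forall fun n => ?_)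
    exact le_trans (hAμ n) (measure_mono (Set.subset_iUnion_of_subset 0 (by simp)))
  rw [hac hνlim] at hμlim
  exact absurd hμlim (by simpa using hb.ne')

section AuxGeom
variable {X : Type*} [MetricSpace X] [MeasurableSpace X] [BorelSpace X]
lemma aux_packing {S : Set X} {d c r0 : ℝ} (hSm : MeasurableSet S) (hc : 0 < c)
    (hlow : ∀ x ∈ S, ∀ r : ℝ, 0 < r → r ≤ r0 →
      ENNReal.ofReal (r^d/c) ≤ μH[d] (S ∩ closedBall x r))
    {ε : ℝ} (hε : 0 < ε) (hεr : ε ≤ r0) (F : Finset X) (hFS : ↑F ⊆ S)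
    (hsep : (↑F : Set X).Pairwise fun x y => ε/2 < dist x y) :
    (F.card : ℝ≥0∞) * ENNReal.ofReal ((ε/4)^d / c) ≤ μH[d] S := by
  have h1 : ∀ x ∈ F, ENNReal.ofReal ((ε/4)^d/c) ≤ μH[d] (S ∩ closedBall x (ε/4)) :=
    fun x hx => hlow x (hFS hx) (ε/4) (by linarith) (by linarith)
  have hdisj : (↑F : Set X).PairwiseDisjoint fun x => S ∩ closedBall x (ε/4) := by
    intro x hx y hy hxy
    have hd := hsep hx hy hxy
    exact Set.disjoint_of_subset Set.inter_subset_right Set.inter_subset_right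
      (closedBall_disjoint_closedBall (by linarith))
  calc (F.card : ℝ≥0∞) * ENNReal.ofReal ((ε/4)^d / c)
      = ∑ _x ∈ F, ENNReal.ofReal ((ε/4)^d/c) := by rw [Finset.sum_const, nsmul_eq_mul]
    _ ≤ ∑ x ∈ F, μH[d] (S ∩ closedBall x (ε/4)) := Finset.sum_le_sum h1
    _ = μH[d] (⋃ x ∈ F, S ∩ closedBall x (ε/4)) :=
        (measure_biUnion_finset hdisj fun x _ => hSm.inter measurableSet_closedBall).symm
    _ ≤ μH[d] S := measure_mono (by
        simp only [Set.iUnion_subset_iff]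
        exact fun x _ => Set.inter_subset_left)

lemma aux_finite {S : Set X} {d c r0 : ℝ} (hSc : IsCompact S) (hr0 : 0 < r0)
    (hupp : ∀ x ∈ S, ∀ r : ℝ, 0 < r → r ≤ r0 →
      μH[d] (S ∩ closedBall x r) ≤ ENNReal.ofReal (c * r^d)) :
    μH[d] S ≠ ⊤ := by
  obtain ⟨t, htS, hcov⟩ := hSc.elim_nhds_subcover (fun x => ball x r0)
    (fun x _ => ball_mem_nhds x hr0)
  have hb : μH[d] S ≤ ∑ x ∈ t, ENNReal.ofReal (c * r0^d) := by
    calc μH[d] S ≤ μH[d] (⋃ x ∈ t, S ∩ closedBall x r0) := measure_mono (by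
          intro z hz
          obtain ⟨x, hx⟩ := Set.mem_iUnion₂.mp (hcov hz)
          exact Set.mem_iUnion₂.mpr ⟨x, hx.1, hz, ball_subset_closedBall hx.2⟩)
    _ ≤ ∑ x ∈ t, μH[d] (S ∩ closedBall x r0) := measure_biUnion_finset_le _ _
    _ ≤ ∑ x ∈ t, ENNReal.ofReal (c * r0^d) :=
        Finset.sum_le_sum fun x hx => hupp x (htS x hx) r0 hr0 le_rfl
  exact ne_top_of_le_ne_top (ENNReal.sum_lt_top.mpr fun _ _ => ofReal_lt_top).ne hb

lemma aux_maximal {S : Set X} {d c r0 : ℝ} (hSc : IsCompact S) (hc : 0 < c)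
    (hlow : ∀ x ∈ S, ∀ r : ℝ, 0 < r → r ≤ r0 →
      ENNReal.ofReal (r^d/c) ≤ μH[d] (S ∩ closedBall x r))
    (hfin : μH[d] S ≠ ⊤)
    {ε : ℝ} (hε : 0 < ε) (hεr : ε ≤ r0) :
    ∃ F : Finset X, ↑F ⊆ S ∧ S ⊆ ⋃ x ∈ F, closedBall x (ε/2) ∧
      (F.card : ℝ≥0∞) * ENNReal.ofReal ((ε/4)^d / c) ≤ μH[d] S := by
  classical
  set a := ENNReal.ofReal ((ε/4)^d/c) with ha
  have hd4 : (0:ℝ) < (ε/4)^d/c := div_pos (Real.rpow_pos_of_pos (by linarith) d) hc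
  have ha0 : a ≠ 0 := by simp [ha, ENNReal.ofReal_eq_zero, not_le, hd4]
  have haT : a ≠ ⊤ := ENNReal.ofReal_ne_top
  set T := {n : ℕ | ∃ F : Finset X, ↑F ⊆ S ∧
    ((↑F : Set X).Pairwise fun x y => ε/2 < dist x y) ∧ F.card = n} with hT
  have hT0 : (0 : ℕ) ∈ T := ⟨∅, by simp, by simp, rfl⟩
  have hTb : ∀ n ∈ T, n ≤ ⌈(μH[d] S / a).toReal⌉₊ := by
    rintro n ⟨F, hFS, hsep, rfl⟩
    have h1 := aux_packing hSc.measurableSet hc hlow hε hεr F hFS hsep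
    have h2 : (F.card : ℝ≥0∞) ≤ μH[d] S / a :=
      (ENNReal.le_div_iff_mul_le (Or.inl ha0) (Or.inl haT)).mpr h1
    have h3 : (F.card : ℝ) ≤ (μH[d] S / a).toReal := by
      have := ENNReal.toReal_mono (ENNReal.div_lt_top hfin ha0).ne h2
      simpa using this
    exact_mod_cast h3.trans (Nat.le_ceil _)
  obtain ⟨F, hFS, hsep, hcard⟩ := Nat.sSup_mem ⟨0, hT0⟩ ⟨_, hTb⟩
  refine ⟨F, hFS, ?_, aux_packing hSc.measurableSet hc hlow hε hεr F hFS hsep⟩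
  by_contra hcov
  obtain ⟨y, hyS, hyc⟩ := Set.not_subset.mp hcov
  have hyd : ∀ x ∈ F, ε/2 < dist y x := by
    intro x hx
    by_contra h
    exact hyc (Set.mem_iUnion₂.mpr ⟨x, hx, by simpa [mem_closedBall] using not_lt.mp h⟩)
  have hyF : y ∉ F := by
    intro h
    exact absurd (hyd y h) (by simp [dist_self]; linarith)
  have hmem : F.card + 1 ∈ T := by
    refine ⟨insert y F, ?_, ?_, ?_⟩
    · rw [Finset.coe_insert]; exact Set.insert_subset hyS hFS
    · rw [Finset.coe_insert]
      refine Set.pairwise_insert.mpr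
        ⟨hsep, fun b hb _ => ⟨hyd b hb, by rw [dist_comm]; exact hyd b hb⟩⟩
    · rw [Finset.card_insert_of_notMem hyF]
  have := le_csSup ⟨_, hTb⟩ hmem
  omega
end AuxGeom

theorem stmt11 {X : Type*} [MetricSpace X] [CompactSpace X] [SecondCountableTopology X]
    [MeasurableSpace X] [BorelSpace X]
    (μ : Measure X) [IsProbabilityMeasure μ] (d : ℝ) (S : Set X)
    (hreg : IsRegularSet S d)
    -- `S` is the support of `μ`: a closed set of full measure, minimal among such
    (hfull : μ Sᶜ = 0)
    (hmin : ∀ U : Set X, IsClosed U → μ Uᶜ = 0 → S ⊆ U)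
    (hac : μ ≪ μH[d])
    (p : ℝ) (hp1 : 1 ≤ p) (hpd : p ≤ d / 2) :
    dLower μ = d ∧ dUpper μ p = d := by
  obtain ⟨hSc, c, r0, hc, hr0, hb⟩ := hreg
  have hlow : ∀ x ∈ S, ∀ r : ℝ, 0 < r → r ≤ r0 →
      ENNReal.ofReal (r^d/c) ≤ μH[d] (S ∩ closedBall x r) :=
    fun x hx r h1 h2 => (hb x hx r h1 h2).1
  have hupp : ∀ x ∈ S, ∀ r : ℝ, 0 < r → r ≤ r0 →
      μH[d] (S ∩ closedBall x r) ≤ ENNReal.ofReal (c * r^d) :=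
    fun x hx r h1 h2 => (hb x hx r h1 h2).2
  have hfin := aux_finite hSc hr0 hupp
  have hSm : MeasurableSet S := hSc.measurableSet
  have hμS : μ S = 1 := by
    have h := measure_add_measure_compl (μ := μ) hSm
    rw [hfull, add_zero] at h
    rw [h]; exact measure_univ
  have hd2 : 2 ≤ d := by linarith
  -- upper covering bound
  have hcovU : ∀ ε : ℝ, 0 < ε → ε ≤ r0 → ∀ τ : ℝ, 0 ≤ τ →
      ((covN μ ε τ : ℝ≥0∞)) * ENNReal.ofReal ((ε/4)^d/c) ≤ μH[d] S := by
    intro ε hε hεr τ hτ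
    obtain ⟨F, hFS, hFcov, hFb⟩ := aux_maximal hSc hc hlow hfin hε hεr
    have hmem : F.card ∈ {m | ∃ S' : Set X, MeasurableSet S' ∧
        ENNReal.ofReal (1 - τ) ≤ μ S' ∧ ∃ F' : Finset X, F'.card = m ∧
        S' ⊆ ⋃ x ∈ F', Metric.closedBall x (ε / 2)} :=
      ⟨S, hSm, by rw [hμS]; exact ENNReal.ofReal_le_one.mpr (by linarith), F, rfl, hFcov⟩
    have hle : covN μ ε τ ≤ F.card := Nat.sInf_le hmem
    exact le_trans (mul_le_mul_left (by exact_mod_cast hle) _) hFb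
  -- the restricted Hausdorff measure
  set ν : Measure X := μH[d].restrict S with hνdef
  have hν_apply : ∀ A : Set X, ν A = μH[d] (A ∩ S) := fun A => Measure.restrict_apply' hSm
  have hμν : μ ≪ ν := by
    intro A hA
    rw [hν_apply] at hA
    have h1 : μ (A ∩ S) = 0 := hac hA
    have h2 : μ (A \ S) = 0 := measure_mono_null (fun x hx => hx.2) hfull
    have h3 := measure_le_inter_add_diff μ A S
    rw [h1, h2, add_zero] at h3
    exact le_antisymm h3 zero_le
  have hball : ∀ (x : X) (ε : ℝ), 0 < ε → ε ≤ r0 →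
      ν (closedBall x (ε/2)) ≤ ENNReal.ofReal (c * ε^d) := by
    intro x ε hε hεr
    rw [hν_apply]
    rcases Set.eq_empty_or_nonempty (closedBall x (ε/2) ∩ S) with h | ⟨y, hyB, hyS⟩
    · rw [h]; simp
    · have hsub : closedBall x (ε/2) ∩ S ⊆ S ∩ closedBall y ε := by
        rintro z ⟨hzB, hzS⟩
        refine ⟨hzS, mem_closedBall.mpr ?_⟩
        have h1 : dist z x ≤ ε/2 := mem_closedBall.mp hzB
        have h2 : dist y x ≤ ε/2 := mem_closedBall.mp hyB
        calc dist z y ≤ dist z x + dist x y := dist_triangle z x y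
          _ ≤ ε/2 + ε/2 := by rw [dist_comm x y]; linarith
          _ = ε := by ring
      exact (measure_mono hsub).trans (hupp y hyS ε hε hεr)
  -- lower covering bound
  have hcovL : ∀ τ0 : ℝ, 0 < τ0 → τ0 < 1 → ∃ δ : ℝ, 0 < δ ∧ ∀ ε : ℝ, 0 < ε → ε ≤ r0 →
      ∀ τ : ℝ, 0 ≤ τ → τ ≤ τ0 →
      ENNReal.ofReal δ ≤ (covN μ ε τ : ℝ≥0∞) * ENNReal.ofReal (c * ε^d) := by
    intro τ0 h0 h1
    obtain ⟨δ, hδ0, hδ⟩ := aux_eps_delta μ ν hμν (ENNReal.ofReal (1 - τ0))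
      (ENNReal.ofReal_pos.mpr (by linarith))
    refine ⟨δ, hδ0, ?_⟩
    intro ε hε hεr τ hτ0 hττ0
    obtain ⟨F, hFS, hFcov, _⟩ := aux_maximal hSc hc hlow hfin hε hεr
    have hne : Set.Nonempty {m | ∃ S' : Set X, MeasurableSet S' ∧
        ENNReal.ofReal (1 - τ) ≤ μ S' ∧ ∃ F' : Finset X, F'.card = m ∧
        S' ⊆ ⋃ x ∈ F', Metric.closedBall x (ε / 2)} :=
      ⟨F.card, S, hSm, by rw [hμS]; exact ENNReal.ofReal_le_one.mpr (by linarith), F, rfl, hFcov⟩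
    obtain ⟨S', hS'm, hS'μ, F', hF'c, hF'cov⟩ := Nat.sInf_mem hne
    have hδS' : ENNReal.ofReal δ ≤ ν S' :=
      hδ S' hS'm (le_trans (ENNReal.ofReal_le_ofReal (by linarith)) hS'μ)
    calc ENNReal.ofReal δ ≤ ν S' := hδS'
      _ ≤ ν (⋃ x ∈ F', closedBall x (ε/2)) := measure_mono hF'cov
      _ ≤ ∑ x ∈ F', ν (closedBall x (ε/2)) := measure_biUnion_finset_le _ _
      _ ≤ ∑ _x ∈ F', ENNReal.ofReal (c * ε^d) :=
          Finset.sum_le_sum fun x _ => hball x ε hε hεr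
      _ = (F'.card : ℝ≥0∞) * ENNReal.ofReal (c*ε^d) := by rw [Finset.sum_const, nsmul_eq_mul]
      _ = (covN μ ε τ : ℝ≥0∞) * ENNReal.ofReal (c*ε^d) := by rw [hF'c]; rfl
  -- constants
  set M : ℝ := (μH[d] S).toReal with hM
  set C : ℝ := max 1 (M * c * 4^(d:ℝ)) with hC
  have hC1 : (1:ℝ) ≤ C := le_max_left _ _
  -- key tendsto lemma
  have key : ∀ τ0 : ℝ, 0 < τ0 → τ0 < 1 → ∀ τf : ℝ → ℝ,
      (∀ᶠ ε in nhdsWithin (0:ℝ) (Set.Ioi 0), 0 ≤ τf ε ∧ τf ε ≤ τ0) →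
      Tendsto (fun ε => dEps μ ε (τf ε)) (nhdsWithin (0:ℝ) (Set.Ioi 0)) (nhds d) := by
    intro τ0 hτ00 hτ01 τf hτf
    obtain ⟨δ, hδ0, hδ⟩ := hcovL τ0 hτ00 hτ01
    have hm0 : (0:ℝ) < min r0 1 := lt_min hr0 one_pos
    have hev : ∀ᶠ ε in nhdsWithin (0:ℝ) (Set.Ioi 0),
        d + (Real.log δ - Real.log c)/(-Real.log ε) ≤ dEps μ ε (τf ε) ∧
        dEps μ ε (τf ε) ≤ d + Real.log C/(-Real.log ε) := by
      filter_upwards [Ioo_mem_nhdsGT_of_mem (Set.mem_Ico.mpr ⟨le_refl (0:ℝ), hm0⟩), hτf]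
        with ε hεI hτ
      obtain ⟨hε0, hεm⟩ := hεI
      have hεr : ε ≤ r0 := le_trans hεm.le (min_le_left _ _)
      have hε1 : ε < 1 := lt_of_lt_of_le hεm (min_le_right _ _)
      have hlogε : Real.log ε < 0 := Real.log_neg hε0 hε1
      have ht : 0 < -Real.log ε := by linarith
      have hεd : (0:ℝ) < ε ^ d := Real.rpow_pos_of_pos hε0 d
      have hcd : (0:ℝ) < c * ε ^ d := by positivity
      set N : ℝ := ((covN μ ε (τf ε) : ℕ) : ℝ) with hN
      have hdef : dEps μ ε (τf ε) = Real.log N / (-Real.log ε) := rfl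
      have hLr : δ ≤ N * (c * ε ^ d) := by
        have h := hδ ε hε0 hεr (τf ε) hτ.1 hτ.2
        have h2 := ENNReal.toReal_mono
          (ENNReal.mul_ne_top (ENNReal.natCast_ne_top _) ENNReal.ofReal_ne_top) h
        rwa [ENNReal.toReal_mul, ENNReal.toReal_ofReal hδ0.le,
          ENNReal.toReal_ofReal hcd.le, show ((covN μ ε (τf ε) : ℝ≥0∞)).toReal = N from rfl] at h2
      have hUr : N * ((ε/4)^d / c) ≤ M := by
        have h := hcovU ε hε0 hεr (τf ε) hτ.1
        have h2 := ENNReal.toReal_mono hfin h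
        rwa [ENNReal.toReal_mul, ENNReal.toReal_ofReal (by positivity),
          show ((covN μ ε (τf ε) : ℝ≥0∞)).toReal = N from rfl] at h2
      have hNpos : 0 < N := by nlinarith
      constructor
      · have hlog : Real.log δ - Real.log c - d * Real.log ε ≤ Real.log N := by
          have h1 : Real.log (δ / (c * ε^d)) ≤ Real.log N :=
            Real.log_le_log (by positivity) ((div_le_iff₀ hcd).mpr (by linarith))
          rw [Real.log_div hδ0.ne' hcd.ne', Real.log_mul hc.ne' hεd.ne',
            Real.log_rpow hε0] at h1
          linarith
        have e1 : d + (Real.log δ - Real.log c)/(-Real.log ε)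
            = (Real.log δ - Real.log c - d * Real.log ε)/(-Real.log ε) := by
          have hne : Real.log ε ≠ 0 := ne_of_lt hlogε
          field_simp
          ring
        rw [hdef, e1]
        exact (div_le_div_iff_of_pos_right ht).mpr hlog
      · have h44 : ((ε/4:ℝ))^d = ε^d / 4^(d:ℝ) := Real.div_rpow hε0.le (by norm_num) d
        have h4d : (0:ℝ) < (4:ℝ)^(d:ℝ) := Real.rpow_pos_of_pos (by norm_num) d
        have hNC : N ≤ C / ε^d := by
          have h1 : N * ((ε/4)^d / c) ≤ M := hUr
          rw [h44] at h1
          have h2 : N * (ε^d / 4^(d:ℝ) / c) ≤ M := h1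
          have h3 : N * ε^d ≤ M * c * 4^(d:ℝ) := by
            have := mul_le_mul_of_nonneg_right h2 (mul_nonneg hc.le h4d.le)
            calc N * ε^d = N * (ε^d / 4^(d:ℝ) / c) * (c * 4^(d:ℝ)) := by
                  field_simp
              _ ≤ M * (c * 4^(d:ℝ)) := this
              _ = M * c * 4^(d:ℝ) := by ring
          rw [le_div_iff₀ hεd]
          exact h3.trans (le_max_right _ _)
        have hlog : Real.log N ≤ Real.log C - d * Real.log ε := by
          have h1 : Real.log N ≤ Real.log (C / ε^d) := Real.log_le_log hNpos hNC
          rwa [Real.log_div (by linarith) hεd.ne', Real.log_rpow hε0] at h1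
        have e1 : d + Real.log C/(-Real.log ε)
            = (Real.log C - d * Real.log ε)/(-Real.log ε) := by
          have hne : Real.log ε ≠ 0 := ne_of_lt hlogε
          field_simp
          ring
        rw [hdef, e1]
        exact (div_le_div_iff_of_pos_right ht).mpr hlog
    have hlim0 : ∀ K : ℝ, Tendsto (fun ε : ℝ => d + K/(-Real.log ε))
        (nhdsWithin (0:ℝ) (Set.Ioi 0)) (nhds d) := by
      intro K
      have h1 : Tendsto (fun ε : ℝ => -Real.log ε) (nhdsWithin (0:ℝ) (Set.Ioi 0)) atTop :=
        tendsto_neg_atBot_atTop.comp Real.tendsto_log_nhdsGT_zero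
      have h2 := Tendsto.div_atTop (tendsto_const_nhds (x := K)
        (f := nhdsWithin (0:ℝ) (Set.Ioi 0))) h1
      have h3 := (tendsto_const_nhds (x := d) (f := nhdsWithin (0:ℝ) (Set.Ioi 0))).add h2
      simpa using h3
    exact tendsto_of_tendsto_of_tendsto_of_le_of_le' (hlim0 _) (hlim0 _)
      (hev.mono fun ε h => h.1) (hev.mono fun ε h => h.2)
  -- liminf/limsup values
  have hLval : ∀ τ : ℝ, 0 < τ → τ < 1 →
      liminf (fun ε => dEps μ ε τ) (nhdsWithin (0:ℝ) (Set.Ioi 0)) = d :=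
    fun τ h0 h1 => (key τ h0 h1 (fun _ => τ)
      (Eventually.of_forall fun _ => ⟨h0.le, le_refl τ⟩)).liminf_eq
  have hLval1 : ∀ τ : ℝ, 1 ≤ τ →
      liminf (fun ε => dEps μ ε τ) (nhdsWithin (0:ℝ) (Set.Ioi 0)) = 0 := by
    intro τ h1
    have hcov0 : ∀ ε : ℝ, covN μ ε τ = 0 := by
      intro ε
      refine Nat.sInf_eq_zero.mpr (Or.inl ?_)
      exact ⟨∅, MeasurableSet.empty,
        by simp [ENNReal.ofReal_eq_zero.mpr (by linarith : 1 - τ ≤ 0)], ∅, by simp, by simp⟩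
    have heq : (fun ε => dEps μ ε τ) = fun _ => (0:ℝ) := by
      funext ε; simp [dEps, hcov0]
    rw [heq, liminf_const]
  have hLbdd : ∀ τ : ℝ, τ ∈ Set.Ioi (0:ℝ) →
      liminf (fun ε => dEps μ ε τ) (nhdsWithin (0:ℝ) (Set.Ioi 0)) ≤ d := by
    intro τ hτ
    rcases lt_or_ge τ 1 with h | h
    · rw [hLval τ hτ h]
    · rw [hLval1 τ h]; linarith
  constructor
  · -- dLower
    rw [dLower]
    apply le_antisymm
    · refine Real.iSup_le (fun τ => Real.iSup_le (fun hτ => hLbdd τ hτ) (by linarith))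
        (by linarith)
    · have hbdd : BddAbove (Set.range fun τ : ℝ =>
          ⨆ _ : τ ∈ Set.Ioi (0:ℝ), liminf (fun ε => dEps μ ε τ)
            (nhdsWithin (0:ℝ) (Set.Ioi 0))) := by
        refine ⟨d, ?_⟩
        rintro x ⟨τ, rfl⟩
        exact Real.iSup_le (fun hτ => hLbdd τ hτ) (by linarith)
      refine le_ciSup_of_le hbdd (1/2 : ℝ) ?_
      rw [ciSup_pos (show (1/2:ℝ) ∈ Set.Ioi (0:ℝ) by norm_num)]
      rw [hLval (1/2) (by norm_num) (by norm_num)]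
  · -- dUpper
    have hq : ∀ s : ℝ, 2*p < s →
        limsup (fun ε => dEps μ ε (ε ^ (s*p/(s-2*p)))) (nhdsWithin (0:ℝ) (Set.Ioi 0)) = d := by
      intro s hs
      set q := s*p/(s-2*p) with hqdef
      have hq0 : 0 < q := div_pos (mul_pos (by linarith) (by linarith)) (by linarith)
      have hev : ∀ᶠ ε in nhdsWithin (0:ℝ) (Set.Ioi 0), 0 ≤ ε ^ q ∧ ε ^ q ≤ 1/2 := by
        have hm2 : (0:ℝ) < min 1 ((1/2 : ℝ) ^ q⁻¹) :=
          lt_min one_pos (Real.rpow_pos_of_pos (by norm_num) _)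
        filter_upwards [Ioo_mem_nhdsGT_of_mem (Set.mem_Ico.mpr ⟨le_refl (0:ℝ), hm2⟩)] with ε hε
        refine ⟨(Real.rpow_pos_of_pos hε.1 q).le, ?_⟩
        have h1 : ε ^ q ≤ ((1/2 : ℝ) ^ q⁻¹) ^ q :=
          Real.rpow_le_rpow hε.1.le (le_trans hε.2.le (min_le_right _ _)) hq0.le
        rwa [Real.rpow_inv_rpow (by norm_num) hq0.ne'] at h1
      exact (key (1/2) (by norm_num) (by norm_num) _ hev).limsup_eq
    rw [dUpper]
    apply le_antisymm
    · refine _root_.le_of_forall_pos_le_add fun η hη => ?_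
      refine csInf_le ⟨2*p, fun s hs => hs.1.le⟩ ?_
      exact ⟨by linarith, by rw [hq _ (by linarith)]; linarith⟩
    · refine le_csInf ⟨d+1, by linarith, by rw [hq _ (by linarith)]; linarith⟩ ?_
      · rintro s ⟨hs1, hs2⟩
        rw [hq s hs1] at hs2
        exact hs2

end
end
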